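/- Let H be a Hopf algebra, L a base algebra over H, and A a left H-module equipped with an H-equivariant map ⊛ : A ⊗ A → A ⊗ L. Then A is a dynamical associative algebra, i.e. (id_A⊗m_L)∘(⊛⊗id_L)∘(id_A⊗τ_A)∘(⊛⊗id_A) = (id_A⊗m_L)∘(⊛⊗id_L)∘(id_A⊗⊛) as maps A⊗A⊗A → A⊗L, if and only if the operation on A ⊗ L given by ((a₁⊗ℓ₁), (a₂⊗ℓ₂)) ↦ (a₁ ⊛ (ℓ₁⁽¹⁾ ▷ a₂)) · (ℓ₁⁽²⁾ ℓ₂), with multiplication of the L-components, makes A ⊗ L an associative H-module algebra. -/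
import Mathlib


/-!
STATEMENT 9: Let `H` be a Hopf algebra, `L` a base algebra over `H`, and `A` a left
`H`-module with an `H`-equivariant map `⊛ : A ⊗ A → A ⊗ L`.  Then `⊛` satisfies the
shifted associativity (i.e. `A` is a dynamical associative algebra over `L`) if and
only if the induced operation
`(a₁⊗ℓ₁)·(a₂⊗ℓ₂) = (a₁ ⊛ (ℓ₁⁽¹⁾ ▷ a₂)) · (ℓ₁⁽²⁾ℓ₂)` makes `A ⊗ L` an associative
`H`-module algebra.
-/

open TensorProduct LinearMap

noncomputable section

variable (k : Type*) [CommRing k]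

def rot3 (A B C : Type*) [AddCommGroup A] [Module k A] [AddCommGroup B] [Module k B]
    [AddCommGroup C] [Module k C] :
    (A ⊗[k] B) ⊗[k] C →ₗ[k] (A ⊗[k] C) ⊗[k] B :=
  (TensorProduct.assoc k A C B).symm.toLinearMap ∘ₗ
    (LinearMap.lTensor A (TensorProduct.comm k B C).toLinearMap) ∘ₗ
    (TensorProduct.assoc k A B C).toLinearMap

variable {H : Type*} [Ring H] [HopfAlgebra k H]

/-- Diagonal action on a tensor product of `H`-modules. -/
def tensorAction {B C : Type*} [AddCommGroup B] [Module k B] [AddCommGroup C] [Module k C]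
    (actB : H ⊗[k] B →ₗ[k] B) (actC : H ⊗[k] C →ₗ[k] C) :
    H ⊗[k] (B ⊗[k] C) →ₗ[k] B ⊗[k] C :=
  (TensorProduct.map actB actC) ∘ₗ
    (TensorProduct.tensorTensorTensorComm k H H B C).toLinearMap ∘ₗ
    (LinearMap.rTensor (B ⊗[k] C) (Coalgebra.comul (R := k)))

variable {L : Type*} [Ring L] [Algebra k L]
variable {A : Type*} [AddCommGroup A] [Module k A]

/-- The permutation `τ_A : L ⊗ A → A ⊗ L`, `ℓ ⊗ a ↦ (ℓ⁽¹⁾ ▷ a) ⊗ ℓ⁽²⁾`, built from the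
coaction `δ` of the base algebra and the action of `H` on `A`. -/
def tauMap (δ : L →ₗ[k] H ⊗[k] L) (actA : H ⊗[k] A →ₗ[k] A) :
    L ⊗[k] A →ₗ[k] A ⊗[k] L :=
  (LinearMap.rTensor L actA) ∘ₗ (rot3 k H L A) ∘ₗ (LinearMap.rTensor A δ)

/-- The left-hand side of shifted associativity:
`(a₁ ⊛ a₂) "⊛" a₃` computed with the permutation `τ_A` and the product of `L`. -/
def shiftedL (δ : L →ₗ[k] H ⊗[k] L) (actA : H ⊗[k] A →ₗ[k] A)
    (st : A ⊗[k] A →ₗ[k] A ⊗[k] L) : (A ⊗[k] A) ⊗[k] A →ₗ[k] A ⊗[k] L :=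
  (LinearMap.lTensor A (LinearMap.mul' k L)) ∘ₗ (TensorProduct.assoc k A L L).toLinearMap ∘ₗ
    (LinearMap.rTensor L st) ∘ₗ (TensorProduct.assoc k A A L).symm.toLinearMap ∘ₗ
    (LinearMap.lTensor A (tauMap k δ actA)) ∘ₗ (TensorProduct.assoc k A L A).toLinearMap ∘ₗ
    (LinearMap.rTensor A st)

/-- The right-hand side of shifted associativity: `a₁ ⊛ (a₂ ⊛ a₃)`. -/
def shiftedR (st : A ⊗[k] A →ₗ[k] A ⊗[k] L) : (A ⊗[k] A) ⊗[k] A →ₗ[k] A ⊗[k] L :=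
  (LinearMap.lTensor A (LinearMap.mul' k L)) ∘ₗ (TensorProduct.assoc k A L L).toLinearMap ∘ₗ
    (LinearMap.rTensor L st) ∘ₗ (TensorProduct.assoc k A A L).symm.toLinearMap ∘ₗ
    (LinearMap.lTensor A st) ∘ₗ (TensorProduct.assoc k A A A).toLinearMap

/-- The induced multiplication on `A ⊗ L`. -/
def inducedMul (δ : L →ₗ[k] H ⊗[k] L) (actA : H ⊗[k] A →ₗ[k] A)
    (st : A ⊗[k] A →ₗ[k] A ⊗[k] L) :
    (A ⊗[k] L) ⊗[k] (A ⊗[k] L) →ₗ[k] A ⊗[k] L :=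
  (LinearMap.lTensor A (LinearMap.mul' k L)) ∘ₗ (TensorProduct.assoc k A L L).toLinearMap ∘ₗ
    (TensorProduct.map st (LinearMap.mul' k L)) ∘ₗ
    (TensorProduct.assoc k (A ⊗[k] A) L L).toLinearMap ∘ₗ
    (LinearMap.rTensor L ((TensorProduct.assoc k A A L).symm.toLinearMap ∘ₗ
      (LinearMap.lTensor A (tauMap k δ actA)) ∘ₗ (TensorProduct.assoc k A L A).toLinearMap)) ∘ₗ
    (TensorProduct.assoc k (A ⊗[k] L) A L).symm.toLinearMap

section AuxST9

open TensorProduct LinearMap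

variable {k : Type*} [CommRing k] {H : Type*} [Ring H] [HopfAlgebra k H]
  {L : Type*} [Ring L] [Algebra k L] {A : Type*} [AddCommGroup A] [Module k A]

variable (actA : H ⊗[k] A →ₗ[k] A) (actL : H ⊗[k] L →ₗ[k] L)
  (δ : L →ₗ[k] H ⊗[k] L) (st : A ⊗[k] A →ₗ[k] A ⊗[k] L)

/-- right multiplication of the `L`-component -/
noncomputable def aR : (A ⊗[k] L) ⊗[k] L →ₗ[k] A ⊗[k] L :=
  (LinearMap.lTensor A (LinearMap.mul' k L)) ∘ₗ (TensorProduct.assoc k A L L).toLinearMap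

@[simp] lemma aR_tmul (e : A) (m ℓ : L) :
    aR ((e ⊗ₜ[k] m) ⊗ₜ[k] ℓ) = e ⊗ₜ[k] (m * ℓ) := by
  simp [aR]

lemma aR_aR (t : A ⊗[k] L) (m ℓ : L) :
    aR (aR (t ⊗ₜ[k] m) ⊗ₜ[k] ℓ) = aR (t ⊗ₜ[k] (m * ℓ)) := by
  induction t using TensorProduct.induction_on with
  | zero => simp
  | tmul e m' => simp [mul_assoc]
  | add t₁ t₂ h₁ h₂ => simp only [add_tmul, map_add, h₁, h₂]

lemma aR_one (t : A ⊗[k] L) : aR (t ⊗ₜ[k] (1 : L)) = t := by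
  induction t using TensorProduct.induction_on with
  | zero => simp
  | tmul e m => simp
  | add t₁ t₂ h₁ h₂ => simp only [add_tmul, map_add, h₁, h₂]

/-- `aB (t ⊗ (z ⊗ ℓ)) = t ·ᴸ (z ▷ ℓ)` -/
noncomputable def aB : (A ⊗[k] L) ⊗[k] (H ⊗[k] L) →ₗ[k] A ⊗[k] L :=
  aR ∘ₗ (LinearMap.lTensor (A ⊗[k] L) actL)

@[simp] lemma aB_tmul (t : A ⊗[k] L) (z : H) (ℓ : L) :
    aB actL (t ⊗ₜ[k] (z ⊗ₜ[k] ℓ)) = aR (t ⊗ₜ[k] actL (z ⊗ₜ[k] ℓ)) := by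
  simp [aB]

/-- `aQ ((y ⊗ m) ⊗ c) = (y ▷ c) ⊗ m` -/
noncomputable def aQ : (H ⊗[k] L) ⊗[k] A →ₗ[k] A ⊗[k] L :=
  (LinearMap.rTensor L actA) ∘ₗ (rot3 k H L A)

@[simp] lemma aQ_tmul (y : H) (m : L) (c : A) :
    aQ actA ((y ⊗ₜ[k] m) ⊗ₜ[k] c) = actA (y ⊗ₜ[k] c) ⊗ₜ[k] m := by
  simp [aQ, rot3]

lemma tau_tmul (m : L) (c : A) :
    tauMap k δ actA (m ⊗ₜ[k] c) = aQ actA (δ m ⊗ₜ[k] c) := by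
  simp [tauMap, aQ]

/-- `aG ((a ⊗ (y ⊗ m)) ⊗ b) = st (a ⊗ y▷b) ·ᴸ m` -/
noncomputable def aG : (A ⊗[k] (H ⊗[k] L)) ⊗[k] A →ₗ[k] A ⊗[k] L :=
  aR ∘ₗ (LinearMap.rTensor L st) ∘ₗ (TensorProduct.assoc k A A L).symm.toLinearMap ∘ₗ
    (LinearMap.lTensor A (aQ actA)) ∘ₗ (TensorProduct.assoc k A (H ⊗[k] L) A).toLinearMap

@[simp] lemma aG_tmul (a : A) (y : H) (m : L) (b : A) :
    aG actA st ((a ⊗ₜ[k] (y ⊗ₜ[k] m)) ⊗ₜ[k] b)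
      = aR (st (a ⊗ₜ[k] actA (y ⊗ₜ[k] b)) ⊗ₜ[k] m) := by
  simp [aG]

/-- `aD ((e ⊗ m) ⊗ c) = aG ((e ⊗ δ m) ⊗ c)` -/
noncomputable def aD : ((A ⊗[k] L) ⊗[k] A) →ₗ[k] A ⊗[k] L :=
  aG actA st ∘ₗ (LinearMap.rTensor A (LinearMap.lTensor A δ))

@[simp] lemma aD_tmul (e : A) (m : L) (c : A) :
    aD actA δ st ((e ⊗ₜ[k] m) ⊗ₜ[k] c) = aG actA st ((e ⊗ₜ[k] δ m) ⊗ₜ[k] c) := by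
  simp [aD]

/-- `aE (a ⊗ (d ⊗ n)) = st (a ⊗ d) ·ᴸ n` -/
noncomputable def aE : A ⊗[k] (A ⊗[k] L) →ₗ[k] A ⊗[k] L :=
  aR ∘ₗ (LinearMap.rTensor L st) ∘ₗ (TensorProduct.assoc k A A L).symm.toLinearMap

@[simp] lemma aE_tmul (a d : A) (n : L) :
    aE st (a ⊗ₜ[k] (d ⊗ₜ[k] n)) = aR (st (a ⊗ₜ[k] d) ⊗ₜ[k] n) := by
  simp [aE]

end AuxST9

section AuxST9B

open TensorProduct LinearMap

variable {k : Type*} [CommRing k] {H : Type*} [Ring H] [HopfAlgebra k H]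
  {L : Type*} [Ring L] [Algebra k L] {A : Type*} [AddCommGroup A] [Module k A]

variable (actA : H ⊗[k] A →ₗ[k] A) (actL : H ⊗[k] L →ₗ[k] L)
  (δ : L →ₗ[k] H ⊗[k] L) (st : A ⊗[k] A →ₗ[k] A ⊗[k] L)

lemma aR_apply' (u : (A ⊗[k] L) ⊗[k] L) :
    (LinearMap.lTensor A (LinearMap.mul' k L)) ((TensorProduct.assoc k A L L) u) = aR u := rfl

lemma mu_tmul (a : A) (ℓ₁ : L) (b : A) (ℓ₂ : L) :
    inducedMul k δ actA st ((a ⊗ₜ[k] ℓ₁) ⊗ₜ[k] (b ⊗ₜ[k] ℓ₂))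
      = aR (aG actA st ((a ⊗ₜ[k] δ ℓ₁) ⊗ₜ[k] b) ⊗ₜ[k] ℓ₂) := by
  simp only [inducedMul, coe_comp, Function.comp_apply, LinearEquiv.coe_coe,
    assoc_symm_tmul, rTensor_tmul, assoc_tmul, lTensor_tmul, tau_tmul]
  generalize δ ℓ₁ = v
  induction v using TensorProduct.induction_on with
  | zero => simp
  | tmul y m => simp [aR_apply', aR_aR]
  | add v₁ v₂ h₁ h₂ => simp only [map_add, add_tmul, tmul_add, h₁, h₂]

lemma mu_left (s : A ⊗[k] L) (c : A) (ℓ₃ : L) :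
    inducedMul k δ actA st (s ⊗ₜ[k] (c ⊗ₜ[k] ℓ₃))
      = aR (aD actA δ st (s ⊗ₜ[k] c) ⊗ₜ[k] ℓ₃) := by
  induction s using TensorProduct.induction_on with
  | zero => simp
  | tmul e m => rw [mu_tmul]; simp
  | add s₁ s₂ h₁ h₂ => simp only [map_add, add_tmul, tmul_add, h₁, h₂]

/-- `aM₁ ((a ⊗ v) ⊗ (f ⊗ λ)) = aR (aG ((a ⊗ v) ⊗ f) ⊗ λ)` -/
noncomputable def aM₁ : (A ⊗[k] (H ⊗[k] L)) ⊗[k] (A ⊗[k] L) →ₗ[k] A ⊗[k] L :=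
  aR ∘ₗ (LinearMap.rTensor L (aG actA st)) ∘ₗ
    (TensorProduct.assoc k (A ⊗[k] (H ⊗[k] L)) A L).symm.toLinearMap

@[simp] lemma aM₁_tmul (p : A ⊗[k] (H ⊗[k] L)) (f : A) (lam : L) :
    aM₁ actA st (p ⊗ₜ[k] (f ⊗ₜ[k] lam)) = aR (aG actA st (p ⊗ₜ[k] f) ⊗ₜ[k] lam) := by
  simp [aM₁]

lemma mu_right (a : A) (ℓ₁ : L) (s : A ⊗[k] L) :
    inducedMul k δ actA st ((a ⊗ₜ[k] ℓ₁) ⊗ₜ[k] s)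
      = aM₁ actA st ((a ⊗ₜ[k] δ ℓ₁) ⊗ₜ[k] s) := by
  induction s using TensorProduct.induction_on with
  | zero => simp
  | tmul f lam => rw [mu_tmul]; simp
  | add s₁ s₂ h₁ h₂ => simp only [map_add, tmul_add, h₁, h₂]

lemma shiftedL_tmul (a b c : A) :
    shiftedL k δ actA st ((a ⊗ₜ[k] b) ⊗ₜ[k] c)
      = aD actA δ st (st (a ⊗ₜ[k] b) ⊗ₜ[k] c) := by
  simp only [shiftedL, coe_comp, Function.comp_apply, rTensor_tmul]
  generalize st (a ⊗ₜ[k] b) = t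
  induction t using TensorProduct.induction_on with
  | zero => simp
  | tmul e m =>
    simp only [LinearEquiv.coe_coe, assoc_tmul, lTensor_tmul, tau_tmul, aD_tmul]
    generalize δ m = v
    induction v using TensorProduct.induction_on with
    | zero => simp
    | tmul y m' => simp [aR_apply']
    | add v₁ v₂ h₁ h₂ => simp only [map_add, add_tmul, tmul_add, h₁, h₂]
  | add t₁ t₂ h₁ h₂ => simp only [map_add, add_tmul, tmul_add, h₁, h₂]

lemma shiftedR_tmul (a b c : A) :
    shiftedR k st ((a ⊗ₜ[k] b) ⊗ₜ[k] c)
      = aE st (a ⊗ₜ[k] st (b ⊗ₜ[k] c)) := by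
  simp only [shiftedR, coe_comp, Function.comp_apply, LinearEquiv.coe_coe, assoc_tmul,
    lTensor_tmul]
  generalize st (b ⊗ₜ[k] c) = t
  induction t using TensorProduct.induction_on with
  | zero => simp
  | tmul f lam => simp [aR_apply']
  | add t₁ t₂ h₁ h₂ => simp only [map_add, tmul_add, h₁, h₂]

end AuxST9B

section AuxST9C

open TensorProduct LinearMap Coalgebra

variable {k : Type*} [CommRing k] {H : Type*} [Ring H] [HopfAlgebra k H]
  {L : Type*} [Ring L] [Algebra k L] {A : Type*} [AddCommGroup A] [Module k A]

variable (actA : H ⊗[k] A →ₗ[k] A) (actL : H ⊗[k] L →ₗ[k] L)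
  (δ : L →ₗ[k] H ⊗[k] L) (st : A ⊗[k] A →ₗ[k] A ⊗[k] L)

/-- diagonal action with explicit comultiplication slot -/
noncomputable def aTA2 {B C : Type*} [AddCommGroup B] [Module k B] [AddCommGroup C] [Module k C]
    (actB : H ⊗[k] B →ₗ[k] B) (actC : H ⊗[k] C →ₗ[k] C) :
    (H ⊗[k] H) ⊗[k] (B ⊗[k] C) →ₗ[k] B ⊗[k] C :=
  (TensorProduct.map actB actC) ∘ₗ (TensorProduct.tensorTensorTensorComm k H H B C).toLinearMap

@[simp] lemma aTA2_tmul {B C : Type*} [AddCommGroup B] [Module k B] [AddCommGroup C] [Module k C]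
    (actB : H ⊗[k] B →ₗ[k] B) (actC : H ⊗[k] C →ₗ[k] C) (x₁ x₂ : H) (b : B) (c : C) :
    aTA2 actB actC ((x₁ ⊗ₜ[k] x₂) ⊗ₜ[k] (b ⊗ₜ[k] c))
      = actB (x₁ ⊗ₜ[k] b) ⊗ₜ[k] actC (x₂ ⊗ₜ[k] c) := by
  simp [aTA2]

lemma tensorAction_tmul {B C : Type*} [AddCommGroup B] [Module k B] [AddCommGroup C] [Module k C]
    (actB : H ⊗[k] B →ₗ[k] B) (actC : H ⊗[k] C →ₗ[k] C) (x : H) (t : B ⊗[k] C) :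
    tensorAction k actB actC (x ⊗ₜ[k] t) = aTA2 actB actC (comul (R := k) x ⊗ₜ[k] t) := by
  simp [tensorAction, aTA2]

/-- `aP1' ((h ⊗ m) ⊗ y) = (h * y) ⊗ m` -/
noncomputable def aP1' : (H ⊗[k] L) ⊗[k] H →ₗ[k] H ⊗[k] L :=
  (LinearMap.rTensor L (LinearMap.mul' k H)) ∘ₗ (rot3 k H L H)

@[simp] lemma aP1'_tmul (h : H) (m : L) (y : H) :
    aP1' ((h ⊗ₜ[k] m) ⊗ₜ[k] y) = (h * y) ⊗ₜ[k] m := by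
  simp [aP1', rot3]

/-- LHS of base-algebra condition (i) -/
noncomputable def aP1 : (H ⊗[k] H) ⊗[k] L →ₗ[k] H ⊗[k] L :=
  aP1' ∘ₗ (LinearMap.rTensor H δ) ∘ₗ (LinearMap.rTensor H actL) ∘ₗ (rot3 k H H L)

@[simp] lemma aP1_tmul (z y : H) (ℓ : L) :
    aP1 actL δ ((z ⊗ₜ[k] y) ⊗ₜ[k] ℓ) = aP1' (δ (actL (z ⊗ₜ[k] ℓ)) ⊗ₜ[k] y) := by
  simp [aP1, rot3]

/-- RHS of base-algebra condition (i) -/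
noncomputable def aP2 : (H ⊗[k] H) ⊗[k] (H ⊗[k] L) →ₗ[k] H ⊗[k] L :=
  (TensorProduct.map (LinearMap.mul' k H) actL) ∘ₗ
    (TensorProduct.tensorTensorTensorComm k H H H L).toLinearMap

@[simp] lemma aP2_tmul (z y g : H) (n : L) :
    aP2 actL ((z ⊗ₜ[k] y) ⊗ₜ[k] (g ⊗ₜ[k] n)) = (z * g) ⊗ₜ[k] actL (y ⊗ₜ[k] n) := by
  simp [aP2]

/-- multiplicativity gadget for `actL` -/
noncomputable def aMA : (H ⊗[k] H) ⊗[k] (L ⊗[k] L) →ₗ[k] L :=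
  (LinearMap.mul' k L) ∘ₗ (TensorProduct.map actL actL) ∘ₗ
    (TensorProduct.tensorTensorTensorComm k H H L L).toLinearMap

@[simp] lemma aMA_tmul (x₁ x₂ : H) (m n : L) :
    aMA actL ((x₁ ⊗ₜ[k] x₂) ⊗ₜ[k] (m ⊗ₜ[k] n))
      = actL (x₁ ⊗ₜ[k] m) * actL (x₂ ⊗ₜ[k] n) := by
  simp [aMA]

/-- quasi-commutativity gadget -/
noncomputable def aQC : (H ⊗[k] L) ⊗[k] L →ₗ[k] L :=
  (LinearMap.mul' k L) ∘ₗ (LinearMap.rTensor L actL) ∘ₗ (rot3 k H L L)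

@[simp] lemma aQC_tmul (z : H) (m n : L) :
    aQC actL ((z ⊗ₜ[k] m) ⊗ₜ[k] n) = actL (z ⊗ₜ[k] n) * m := by
  simp [aQC, rot3]

end AuxST9C

set_option synthInstance.maxHeartbeats 1000000
set_option maxHeartbeats 4000000

section AuxST9D

open TensorProduct LinearMap Coalgebra

variable {k : Type*} [CommRing k] {H : Type*} [Ring H] [HopfAlgebra k H]
  {L : Type*} [Ring L] [Algebra k L] {A : Type*} [AddCommGroup A] [Module k A]

variable (actA : H ⊗[k] A →ₗ[k] A) (actL : H ⊗[k] L →ₗ[k] L)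
  (δ : L →ₗ[k] H ⊗[k] L) (st : A ⊗[k] A →ₗ[k] A ⊗[k] L)

lemma coassoc_comp' :
    (LinearMap.lTensor H (comul (R := k) (A := H))) ∘ₗ comul
      = (TensorProduct.assoc k H H H).toLinearMap ∘ₗ
          (LinearMap.rTensor H (comul (R := k))) ∘ₗ comul :=
  Coalgebra.coassoc.symm

lemma coZ (x : H) :
    LinearMap.rTensor H (LinearMap.lTensor H (comul (R := k)))
        (LinearMap.rTensor H (comul (R := k)) (comul x))
      = LinearMap.rTensor H (TensorProduct.assoc k H H H).toLinearMap
          (LinearMap.rTensor H (LinearMap.rTensor H (comul (R := k)))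
            (LinearMap.rTensor H (comul (R := k)) (comul x))) := by
  have h : (LinearMap.rTensor H (LinearMap.lTensor H (comul (R := k)))) ∘ₗ
        (LinearMap.rTensor H (comul (R := k)))
      = (LinearMap.rTensor H (TensorProduct.assoc k H H H).toLinearMap) ∘ₗ
          (LinearMap.rTensor H (LinearMap.rTensor H (comul (R := k)))) ∘ₗ
          (LinearMap.rTensor H (comul (R := k))) := by
    simp only [← LinearMap.rTensor_comp]
    rw [coassoc_comp']
  exact DFunLike.congr_fun h (comul x)

lemma coY' (w : H ⊗[k] H) :
    (TensorProduct.assoc k (H ⊗[k] H) H H).symm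
        (TensorProduct.map (comul (R := k)) (comul (R := k)) w)
      = LinearMap.rTensor H (LinearMap.rTensor H (comul (R := k)))
          ((TensorProduct.assoc k H H H).symm (LinearMap.lTensor H (comul (R := k)) w)) := by
  induction w using TensorProduct.induction_on with
  | zero => simp
  | tmul c d =>
    simp only [map_tmul, lTensor_tmul]
    generalize comul (R := k) d = e
    induction e using TensorProduct.induction_on with
    | zero => simp
    | tmul e₁ e₂ => simp
    | add e₁ e₂ h₁ h₂ => simp only [tmul_add, map_add, h₁, h₂]
  | add w₁ w₂ h₁ h₂ => simp only [map_add, h₁, h₂]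

lemma coY (x : H) :
    (TensorProduct.assoc k (H ⊗[k] H) H H).symm
        (TensorProduct.map (comul (R := k)) (comul (R := k)) (comul x))
      = LinearMap.rTensor H (LinearMap.rTensor H (comul (R := k)))
          (LinearMap.rTensor H (comul (R := k)) (comul x)) := by
  rw [coY', Coalgebra.coassoc_symm_apply]

end AuxST9D

section AuxST9E

open TensorProduct LinearMap Coalgebra

variable {k : Type*} [CommRing k] {H : Type*} [Ring H] [HopfAlgebra k H]
  {L : Type*} [Ring L] [Algebra k L] {A : Type*} [AddCommGroup A] [Module k A]

variable (actA : H ⊗[k] A →ₗ[k] A) (actL : H ⊗[k] L →ₗ[k] L)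
  (δ : L →ₗ[k] H ⊗[k] L) (st : A ⊗[k] A →ₗ[k] A ⊗[k] L)

lemma mu_unit_unit (δ_one : δ (1 : L) = 1) (actA_one : ∀ a : A, actA ((1 : H) ⊗ₜ[k] a) = a)
    (a b : A) :
    inducedMul k δ actA st ((a ⊗ₜ[k] (1 : L)) ⊗ₜ[k] (b ⊗ₜ[k] (1 : L))) = st (a ⊗ₜ[k] b) := by
  rw [mu_tmul, δ_one, Algebra.TensorProduct.one_def, aG_tmul, actA_one, aR_one, aR_one]

lemma aM₁_unit (actA_one : ∀ a : A, actA ((1 : H) ⊗ₜ[k] a) = a) (a : A) (t : A ⊗[k] L) :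
    aM₁ actA st ((a ⊗ₜ[k] ((1 : H) ⊗ₜ[k] (1 : L))) ⊗ₜ[k] t) = aE st (a ⊗ₜ[k] t) := by
  induction t using TensorProduct.induction_on with
  | zero => simp
  | tmul f lam => rw [aM₁_tmul, aG_tmul, actA_one, aR_one, aE_tmul]
  | add t₁ t₂ h₁ h₂ => simp only [tmul_add, map_add, h₁, h₂]

lemma backward_shift (δ_one : δ (1 : L) = 1) (actA_one : ∀ a : A, actA ((1 : H) ⊗ₜ[k] a) = a)
    (hμ : (inducedMul k δ actA st) ∘ₗ
            (LinearMap.rTensor (A ⊗[k] L) (inducedMul k δ actA st))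
          = (inducedMul k δ actA st) ∘ₗ
              (LinearMap.lTensor (A ⊗[k] L) (inducedMul k δ actA st)) ∘ₗ
              (TensorProduct.assoc k (A ⊗[k] L) (A ⊗[k] L) (A ⊗[k] L)).toLinearMap) :
    shiftedL k δ actA st = shiftedR k st := by
  apply TensorProduct.ext'
  intro x c
  induction x using TensorProduct.induction_on with
  | zero => simp
  | tmul a b =>
    rw [shiftedL_tmul, shiftedR_tmul]
    have h := DFunLike.congr_fun hμ
      (((a ⊗ₜ[k] (1 : L)) ⊗ₜ[k] (b ⊗ₜ[k] (1 : L))) ⊗ₜ[k] (c ⊗ₜ[k] (1 : L)))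
    simp only [coe_comp, Function.comp_apply, rTensor_tmul, LinearEquiv.coe_coe,
      assoc_tmul, lTensor_tmul] at h
    rw [mu_unit_unit actA δ st δ_one actA_one, mu_unit_unit actA δ st δ_one actA_one,
      mu_left, aR_one, mu_right, δ_one, Algebra.TensorProduct.one_def,
      aM₁_unit actA st actA_one] at h
    exact h
  | add x₁ x₂ h₁ h₂ => simp only [add_tmul, map_add, h₁, h₂]

end AuxST9E

section AuxST9F

open TensorProduct LinearMap Coalgebra

variable {k : Type*} [CommRing k] {H : Type*} [Ring H] [HopfAlgebra k H]
  {L : Type*} [Ring L] [Algebra k L] {A : Type*} [AddCommGroup A] [Module k A]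

variable (actA : H ⊗[k] A →ₗ[k] A) (actL : H ⊗[k] L →ₗ[k] L)
  (δ : L →ₗ[k] H ⊗[k] L) (st : A ⊗[k] A →ₗ[k] A ⊗[k] L)

/-- `aρ (h ⊗ (u ⊗ v)) = u ⊗ (h ▷ v)` -/
noncomputable def aρ {B : Type*} [AddCommGroup B] [Module k B] (actB : H ⊗[k] B →ₗ[k] B) :
    H ⊗[k] (A ⊗[k] B) →ₗ[k] A ⊗[k] B :=
  (LinearMap.lTensor A actB) ∘ₗ (TensorProduct.assoc k A H B).toLinearMap ∘ₗ
    (LinearMap.rTensor B (TensorProduct.comm k H A).toLinearMap) ∘ₗ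
    (TensorProduct.assoc k H A B).symm.toLinearMap

@[simp] lemma aρ_tmul {B : Type*} [AddCommGroup B] [Module k B] (actB : H ⊗[k] B →ₗ[k] B)
    (h : H) (u : A) (v : B) :
    aρ actB (h ⊗ₜ[k] (u ⊗ₜ[k] v)) = u ⊗ₜ[k] actB (h ⊗ₜ[k] v) := by
  simp [aρ]

/-- `aK (p ⊗ ((z ⊗ n) ⊗ c)) = aR (aG (p ⊗ (z ▷ c)) ⊗ n)` -/
noncomputable def aK : (A ⊗[k] (H ⊗[k] L)) ⊗[k] ((H ⊗[k] L) ⊗[k] A) →ₗ[k] A ⊗[k] L :=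
  aR ∘ₗ (LinearMap.rTensor L (aG actA st)) ∘ₗ
    (TensorProduct.assoc k (A ⊗[k] (H ⊗[k] L)) A L).symm.toLinearMap ∘ₗ
    (LinearMap.lTensor (A ⊗[k] (H ⊗[k] L)) (aQ actA))

@[simp] lemma aK_tmul (p : A ⊗[k] (H ⊗[k] L)) (z : H) (n : L) (c : A) :
    aK actA st (p ⊗ₜ[k] ((z ⊗ₜ[k] n) ⊗ₜ[k] c))
      = aR (aG actA st (p ⊗ₜ[k] actA (z ⊗ₜ[k] c)) ⊗ₜ[k] n) := by
  simp [aK]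

lemma Gmul (actA_mul : ∀ (x y : H) (a : A),
      actA ((x * y) ⊗ₜ[k] a) = actA (x ⊗ₜ[k] actA (y ⊗ₜ[k] a)))
    (e : A) (u v : H ⊗[k] L) (c : A) :
    aG actA st ((e ⊗ₜ[k] (u * v)) ⊗ₜ[k] c) = aK actA st ((e ⊗ₜ[k] u) ⊗ₜ[k] (v ⊗ₜ[k] c)) := by
  induction u using TensorProduct.induction_on with
  | zero => simp
  | tmul y m =>
    induction v using TensorProduct.induction_on with
    | zero => simp
    | tmul z n =>
      rw [Algebra.TensorProduct.tmul_mul_tmul, aK_tmul, aG_tmul, aG_tmul, actA_mul, aR_aR]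
    | add v₁ v₂ h₁ h₂ => simp only [mul_add, tmul_add, add_tmul, map_add, h₁, h₂]
  | add u₁ u₂ h₁ h₂ => simp only [add_mul, tmul_add, add_tmul, map_add, h₁, h₂]

/-- `aDD (((e ⊗ m) ⊗ ℓ₂) ⊗ c) = aK ((e ⊗ δ m) ⊗ (δ ℓ₂ ⊗ c))` -/
noncomputable def aDD : ((A ⊗[k] L) ⊗[k] L) ⊗[k] A →ₗ[k] A ⊗[k] L :=
  aK actA st ∘ₗ (TensorProduct.assoc k (A ⊗[k] (H ⊗[k] L)) (H ⊗[k] L) A).toLinearMap ∘ₗ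
    (LinearMap.rTensor A (TensorProduct.map (LinearMap.lTensor A δ) δ))

@[simp] lemma aDD_tmul (e : A) (m ℓ₂ : L) (c : A) :
    aDD actA δ st (((e ⊗ₜ[k] m) ⊗ₜ[k] ℓ₂) ⊗ₜ[k] c)
      = aK actA st ((e ⊗ₜ[k] δ m) ⊗ₜ[k] (δ ℓ₂ ⊗ₜ[k] c)) := by
  simp [aDD]

lemma A31 (δ_alg : ∀ ℓ₁ ℓ₂ : L, δ (ℓ₁ * ℓ₂) = δ ℓ₁ * δ ℓ₂)
    (actA_mul : ∀ (x y : H) (a : A),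
      actA ((x * y) ⊗ₜ[k] a) = actA (x ⊗ₜ[k] actA (y ⊗ₜ[k] a)))
    (t : A ⊗[k] L) (ℓ₂ : L) (c : A) :
    aD actA δ st (aR (t ⊗ₜ[k] ℓ₂) ⊗ₜ[k] c) = aDD actA δ st ((t ⊗ₜ[k] ℓ₂) ⊗ₜ[k] c) := by
  induction t using TensorProduct.induction_on with
  | zero => simp
  | tmul e m => rw [aR_tmul, aD_tmul, aDD_tmul, δ_alg, Gmul actA st actA_mul]
  | add t₁ t₂ h₁ h₂ => simp only [add_tmul, map_add, h₁, h₂]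

/-- `aν ((z ⊗ n) ⊗ ((g ⊗ n₂) ⊗ c)) = ((z*g) ▷ c) ⊗ (n ⊗ n₂)` -/
noncomputable def aν : (H ⊗[k] L) ⊗[k] ((H ⊗[k] L) ⊗[k] A) →ₗ[k] A ⊗[k] (L ⊗[k] L) :=
  (LinearMap.rTensor (L ⊗[k] L) actA) ∘ₗ (rot3 k H (L ⊗[k] L) A) ∘ₗ
    (LinearMap.rTensor A (LinearMap.rTensor (L ⊗[k] L) (LinearMap.mul' k H))) ∘ₗ
    (LinearMap.rTensor A (TensorProduct.tensorTensorTensorComm k H L H L).toLinearMap) ∘ₗ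
    (TensorProduct.assoc k (H ⊗[k] L) (H ⊗[k] L) A).symm.toLinearMap

@[simp] lemma aν_tmul (z : H) (n : L) (g : H) (n₂ : L) (c : A) :
    aν actA ((z ⊗ₜ[k] n) ⊗ₜ[k] ((g ⊗ₜ[k] n₂) ⊗ₜ[k] c))
      = actA ((z * g) ⊗ₜ[k] c) ⊗ₜ[k] (n ⊗ₜ[k] n₂) := by
  simp [aν, rot3]

/-- `aKK (p ⊗ ((z⊗n) ⊗ ((g⊗n₂) ⊗ c))) = aR (aR (aG (p ⊗ (z*g)▷c) ⊗ n) ⊗ n₂)` -/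
noncomputable def aKK :
    (A ⊗[k] (H ⊗[k] L)) ⊗[k] ((H ⊗[k] L) ⊗[k] ((H ⊗[k] L) ⊗[k] A)) →ₗ[k] A ⊗[k] L :=
  aR ∘ₗ (LinearMap.rTensor L (aR ∘ₗ (LinearMap.rTensor L (aG actA st)))) ∘ₗ
    (TensorProduct.assoc k ((A ⊗[k] (H ⊗[k] L)) ⊗[k] A) L L).symm.toLinearMap ∘ₗ
    (TensorProduct.assoc k (A ⊗[k] (H ⊗[k] L)) A (L ⊗[k] L)).symm.toLinearMap ∘ₗ
    (LinearMap.lTensor (A ⊗[k] (H ⊗[k] L)) (aν actA))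

@[simp] lemma aKK_tmul (p : A ⊗[k] (H ⊗[k] L)) (z : H) (n : L) (g : H) (n₂ : L) (c : A) :
    aKK actA st (p ⊗ₜ[k] ((z ⊗ₜ[k] n) ⊗ₜ[k] ((g ⊗ₜ[k] n₂) ⊗ₜ[k] c)))
      = aR (aR (aG actA st (p ⊗ₜ[k] actA ((z * g) ⊗ₜ[k] c)) ⊗ₜ[k] n) ⊗ₜ[k] n₂) := by
  simp [aKK]

lemma Kmul (actA_mul : ∀ (x y : H) (a : A),
      actA ((x * y) ⊗ₜ[k] a) = actA (x ⊗ₜ[k] actA (y ⊗ₜ[k] a)))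
    (e : A) (u v w : H ⊗[k] L) (c : A) :
    aK actA st ((e ⊗ₜ[k] (u * v)) ⊗ₜ[k] (w ⊗ₜ[k] c))
      = aKK actA st ((e ⊗ₜ[k] u) ⊗ₜ[k] (v ⊗ₜ[k] (w ⊗ₜ[k] c))) := by
  induction w using TensorProduct.induction_on with
  | zero => simp
  | tmul g n₂ =>
    rw [aK_tmul, Gmul actA st actA_mul]
    induction u using TensorProduct.induction_on with
    | zero => simp
    | tmul y m =>
      induction v using TensorProduct.induction_on with
      | zero => simp
      | tmul z n =>
        simp only [aK_tmul, aKK_tmul, aG_tmul, actA_mul, aR_aR]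
      | add v₁ v₂ h₁ h₂ => simp only [tmul_add, add_tmul, map_add, h₁, h₂]
    | add u₁ u₂ h₁ h₂ => simp only [tmul_add, add_tmul, map_add, h₁, h₂]
  | add w₁ w₂ h₁ h₂ => simp only [tmul_add, add_tmul, map_add, mul_add, add_mul, h₁, h₂]

end AuxST9F

section AuxST9G

open TensorProduct LinearMap Coalgebra

variable {k : Type*} [CommRing k] {H : Type*} [Ring H] [HopfAlgebra k H]
  {L : Type*} [Ring L] [Algebra k L] {A : Type*} [AddCommGroup A] [Module k A]

variable (actA : H ⊗[k] A →ₗ[k] A) (actL : H ⊗[k] L →ₗ[k] L)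
  (δ : L →ₗ[k] H ⊗[k] L) (st : A ⊗[k] A →ₗ[k] A ⊗[k] L)

/-- `aL2 (t ⊗ rest) = aKK ((lTensor δ t) ⊗ rest)` -/
noncomputable def aL2 :
    (A ⊗[k] L) ⊗[k] ((H ⊗[k] L) ⊗[k] ((H ⊗[k] L) ⊗[k] A)) →ₗ[k] A ⊗[k] L :=
  aKK actA st ∘ₗ
    (LinearMap.rTensor ((H ⊗[k] L) ⊗[k] ((H ⊗[k] L) ⊗[k] A)) (LinearMap.lTensor A δ))

@[simp] lemma aL2_lt (t : A ⊗[k] L) (X : (H ⊗[k] L) ⊗[k] ((H ⊗[k] L) ⊗[k] A)) :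
    aL2 actA δ st (t ⊗ₜ[k] X)
      = aKK actA st ((LinearMap.lTensor A δ t) ⊗ₜ[k] X) := by
  simp [aL2]

lemma aL2_apply (t : A ⊗[k] L) (z : H) (n : L) (g : H) (n₂ : L) (c : A) :
    aL2 actA δ st (t ⊗ₜ[k] ((z ⊗ₜ[k] n) ⊗ₜ[k] ((g ⊗ₜ[k] n₂) ⊗ₜ[k] c)))
      = aR (aR (aD actA δ st (t ⊗ₜ[k] actA ((z * g) ⊗ₜ[k] c)) ⊗ₜ[k] n) ⊗ₜ[k] n₂) := by
  rw [aL2_lt, aKK_tmul, aD]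
  simp only [coe_comp, Function.comp_apply, rTensor_tmul]

lemma A32a (δ_alg : ∀ ℓ₁ ℓ₂ : L, δ (ℓ₁ * ℓ₂) = δ ℓ₁ * δ ℓ₂)
    (actA_mul : ∀ (x y : H) (a : A),
      actA ((x * y) ⊗ₜ[k] a) = actA (x ⊗ₜ[k] actA (y ⊗ₜ[k] a)))
    (t : A ⊗[k] L) (n₁ ℓ₂ : L) (c : A) :
    aDD actA δ st ((aR (t ⊗ₜ[k] n₁) ⊗ₜ[k] ℓ₂) ⊗ₜ[k] c)
      = aL2 actA δ st (t ⊗ₜ[k] (δ n₁ ⊗ₜ[k] (δ ℓ₂ ⊗ₜ[k] c))) := by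
  induction t using TensorProduct.induction_on with
  | zero => simp
  | tmul e m₀ =>
    rw [aR_tmul, aDD_tmul, δ_alg, Kmul actA st actA_mul, aL2_lt]
    simp only [lTensor_tmul]
  | add t₁ t₂ h₁ h₂ => simp only [add_tmul, map_add, h₁, h₂]

/-- `aσs (w ⊗ (s' ⊗ c)) = s' ⊗ (w ⊗ c)` -/
noncomputable def aσs : (H ⊗[k] L) ⊗[k] ((A ⊗[k] A) ⊗[k] A) →ₗ[k]
    (A ⊗[k] A) ⊗[k] ((H ⊗[k] L) ⊗[k] A) :=
  (TensorProduct.assoc k (A ⊗[k] A) (H ⊗[k] L) A).toLinearMap ∘ₗ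
    (LinearMap.rTensor A (TensorProduct.comm k (H ⊗[k] L) (A ⊗[k] A)).toLinearMap) ∘ₗ
    (TensorProduct.assoc k (H ⊗[k] L) (A ⊗[k] A) A).symm.toLinearMap

@[simp] lemma aσs_tmul (w : H ⊗[k] L) (s' : A ⊗[k] A) (c : A) :
    aσs (w ⊗ₜ[k] (s' ⊗ₜ[k] c)) = s' ⊗ₜ[k] (w ⊗ₜ[k] c) := by
  simp [aσs]

/-- `aL4 ((h₁ ⊗ w') ⊗ (w ⊗ ((a⊗b)⊗c))) = aL2 (st (a ⊗ h₁▷b) ⊗ (w' ⊗ (w ⊗ c)))` -/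
noncomputable def aL4 : (H ⊗[k] (H ⊗[k] L)) ⊗[k]
    ((H ⊗[k] L) ⊗[k] ((A ⊗[k] A) ⊗[k] A)) →ₗ[k] A ⊗[k] L :=
  aL2 actA δ st ∘ₗ
    (TensorProduct.map (st ∘ₗ aρ actA) LinearMap.id) ∘ₗ
    (TensorProduct.tensorTensorTensorComm k H (H ⊗[k] L) (A ⊗[k] A)
      ((H ⊗[k] L) ⊗[k] A)).toLinearMap ∘ₗ
    (LinearMap.lTensor (H ⊗[k] (H ⊗[k] L)) aσs)

@[simp] lemma aL4_tmul (h₁ : H) (w' w : H ⊗[k] L) (a b c : A) :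
    aL4 actA δ st ((h₁ ⊗ₜ[k] w') ⊗ₜ[k] (w ⊗ₜ[k] ((a ⊗ₜ[k] b) ⊗ₜ[k] c)))
      = aL2 actA δ st (st (a ⊗ₜ[k] actA (h₁ ⊗ₜ[k] b)) ⊗ₜ[k] (w' ⊗ₜ[k] (w ⊗ₜ[k] c))) := by
  simp [aL4]

lemma A32 (δ_alg : ∀ ℓ₁ ℓ₂ : L, δ (ℓ₁ * ℓ₂) = δ ℓ₁ * δ ℓ₂)
    (actA_mul : ∀ (x y : H) (a : A),
      actA ((x * y) ⊗ₜ[k] a) = actA (x ⊗ₜ[k] actA (y ⊗ₜ[k] a)))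
    (v : H ⊗[k] L) (a b : A) (ℓ₂ : L) (c : A) :
    aDD actA δ st ((aG actA st ((a ⊗ₜ[k] v) ⊗ₜ[k] b) ⊗ₜ[k] ℓ₂) ⊗ₜ[k] c)
      = aL4 actA δ st ((LinearMap.lTensor H δ v) ⊗ₜ[k] (δ ℓ₂ ⊗ₜ[k] ((a ⊗ₜ[k] b) ⊗ₜ[k] c))) := by
  induction v using TensorProduct.induction_on with
  | zero => simp
  | tmul h₁ n₁ =>
    rw [aG_tmul, A32a actA δ st δ_alg actA_mul]
    simp only [lTensor_tmul, aL4_tmul]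
  | add v₁ v₂ h₁ h₂ => simp only [add_tmul, tmul_add, map_add, h₁, h₂]

/-- `aEE (a ⊗ s') = aE (a ⊗ st s')` -/
noncomputable def aEE : A ⊗[k] (A ⊗[k] A) →ₗ[k] A ⊗[k] L :=
  aE st ∘ₗ (LinearMap.lTensor A st)

@[simp] lemma aEE_tmul (a : A) (s' : A ⊗[k] A) :
    aEE st (a ⊗ₜ[k] s') = aE st (a ⊗ₜ[k] st s') := by simp [aEE]

/-- `aL6`: like `aL4` but with `aE`-form (after shifted associativity). -/
noncomputable def aL6 : (H ⊗[k] (H ⊗[k] L)) ⊗[k]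
    ((H ⊗[k] L) ⊗[k] ((A ⊗[k] A) ⊗[k] A)) →ₗ[k] A ⊗[k] L :=
  aR ∘ₗ (LinearMap.rTensor L aR) ∘ₗ
    (LinearMap.rTensor L (LinearMap.rTensor L (aEE st))) ∘ₗ
    (TensorProduct.assoc k (A ⊗[k] (A ⊗[k] A)) L L).symm.toLinearMap ∘ₗ
    (LinearMap.rTensor (L ⊗[k] L) (TensorProduct.assoc k A A A).toLinearMap) ∘ₗ
    (TensorProduct.assoc k (A ⊗[k] A) A (L ⊗[k] L)).symm.toLinearMap ∘ₗ
    (TensorProduct.map (aρ actA) (aν actA)) ∘ₗ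
    (TensorProduct.tensorTensorTensorComm k H (H ⊗[k] L) (A ⊗[k] A)
      ((H ⊗[k] L) ⊗[k] A)).toLinearMap ∘ₗ
    (LinearMap.lTensor (H ⊗[k] (H ⊗[k] L)) aσs)

@[simp] lemma aL6_tmul (h₁ z : H) (n : L) (g : H) (n₂ : L) (a b c : A) :
    aL6 actA st ((h₁ ⊗ₜ[k] (z ⊗ₜ[k] n)) ⊗ₜ[k] ((g ⊗ₜ[k] n₂) ⊗ₜ[k] ((a ⊗ₜ[k] b) ⊗ₜ[k] c)))
      = aR (aR (aE st (a ⊗ₜ[k] st (actA (h₁ ⊗ₜ[k] b) ⊗ₜ[k] actA ((z * g) ⊗ₜ[k] c)))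
          ⊗ₜ[k] n) ⊗ₜ[k] n₂) := by
  simp [aL6]

lemma A33 (hsh : ∀ a b c : A,
      aD actA δ st (st (a ⊗ₜ[k] b) ⊗ₜ[k] c) = aE st (a ⊗ₜ[k] st (b ⊗ₜ[k] c)))
    (X : H ⊗[k] (H ⊗[k] L)) (w : H ⊗[k] L) (a b c : A) :
    aL4 actA δ st (X ⊗ₜ[k] (w ⊗ₜ[k] ((a ⊗ₜ[k] b) ⊗ₜ[k] c)))
      = aL6 actA st (X ⊗ₜ[k] (w ⊗ₜ[k] ((a ⊗ₜ[k] b) ⊗ₜ[k] c))) := by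
  induction X using TensorProduct.induction_on with
  | zero => simp
  | tmul h₁ w' =>
    induction w' using TensorProduct.induction_on with
    | zero => simp
    | tmul z n =>
      induction w using TensorProduct.induction_on with
      | zero => simp
      | tmul g n₂ =>
        rw [aL4_tmul, aL2_apply, hsh, aL6_tmul]
      | add w₁ w₂ h₁ h₂ => simp only [tmul_add, add_tmul, map_add, h₁, h₂]
    | add w₁ w₂ h₁ h₂ => simp only [tmul_add, add_tmul, map_add, h₁, h₂]
  | add X₁ X₂ h₁ h₂ => simp only [add_tmul, map_add, h₁, h₂]

end AuxST9G

section AuxST9H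

open TensorProduct LinearMap Coalgebra

variable {k : Type*} [CommRing k] {H : Type*} [Ring H] [HopfAlgebra k H]
  {L : Type*} [Ring L] [Algebra k L] {A : Type*} [AddCommGroup A] [Module k A]

variable (actA : H ⊗[k] A →ₗ[k] A) (actL : H ⊗[k] L →ₗ[k] L)
  (δ : L →ₗ[k] H ⊗[k] L) (st : A ⊗[k] A →ₗ[k] A ⊗[k] L)

/-- `aτst ((g⊗n₂) ⊗ ((b⊗c)⊗ℓ₃)) = st (b ⊗ g▷c) ⊗ (n₂*ℓ₃)` -/
noncomputable def aτst : (H ⊗[k] L) ⊗[k] ((A ⊗[k] A) ⊗[k] L) →ₗ[k] (A ⊗[k] L) ⊗[k] L :=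
  (TensorProduct.map (st ∘ₗ aρ actA) (LinearMap.mul' k L)) ∘ₗ
    (TensorProduct.tensorTensorTensorComm k H L (A ⊗[k] A) L).toLinearMap

@[simp] lemma aτst_tmul (g : H) (n₂ : L) (b c : A) (ℓ₃ : L) :
    aτst actA st ((g ⊗ₜ[k] n₂) ⊗ₜ[k] ((b ⊗ₜ[k] c) ⊗ₜ[k] ℓ₃))
      = st (b ⊗ₜ[k] actA (g ⊗ₜ[k] c)) ⊗ₜ[k] (n₂ * ℓ₃) := by
  simp [aτst]

/-- `aψ ((a ⊗ vp) ⊗ t) = aE (a ⊗ aTA2 (vp ⊗ t))` -/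
noncomputable def aψ : (A ⊗[k] (H ⊗[k] H)) ⊗[k] (A ⊗[k] L) →ₗ[k] A ⊗[k] L :=
  aE st ∘ₗ (LinearMap.lTensor A (aTA2 actA actL)) ∘ₗ
    (TensorProduct.assoc k A (H ⊗[k] H) (A ⊗[k] L)).toLinearMap

@[simp] lemma aψ_tmul (a : A) (vp : H ⊗[k] H) (t : A ⊗[k] L) :
    aψ actA actL st ((a ⊗ₜ[k] vp) ⊗ₜ[k] t)
      = aE st (a ⊗ₜ[k] aTA2 actA actL (vp ⊗ₜ[k] t)) := by
  simp [aψ]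

noncomputable def aN₁ : (A ⊗[k] (H ⊗[k] (H ⊗[k] L))) ⊗[k] ((A ⊗[k] L) ⊗[k] L) →ₗ[k]
    A ⊗[k] L :=
  aR ∘ₗ (LinearMap.rTensor L aR) ∘ₗ
    (LinearMap.rTensor L (LinearMap.rTensor L (aψ actA actL st))) ∘ₗ
    (TensorProduct.assoc k ((A ⊗[k] (H ⊗[k] H)) ⊗[k] (A ⊗[k] L)) L L).symm.toLinearMap ∘ₗ
    (TensorProduct.tensorTensorTensorComm k (A ⊗[k] (H ⊗[k] H)) L (A ⊗[k] L) L).toLinearMap ∘ₗ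
    (LinearMap.rTensor ((A ⊗[k] L) ⊗[k] L)
      ((TensorProduct.assoc k A (H ⊗[k] H) L).symm.toLinearMap ∘ₗ
        (LinearMap.lTensor A (TensorProduct.assoc k H H L).symm.toLinearMap)))

@[simp] lemma aN₁_tmul (a : A) (h z : H) (n'' : L) (t : A ⊗[k] L) (lam : L) :
    aN₁ actA actL st ((a ⊗ₜ[k] (h ⊗ₜ[k] (z ⊗ₜ[k] n''))) ⊗ₜ[k] (t ⊗ₜ[k] lam))
      = aR (aR (aE st (a ⊗ₜ[k] aTA2 actA actL ((h ⊗ₜ[k] z) ⊗ₜ[k] t)) ⊗ₜ[k] n'') ⊗ₜ[k] lam) := by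
  simp [aN₁]

lemma B31core
    (hqc : ∀ m n : L, m * n = aQC actL (δ m ⊗ₜ[k] n))
    (v : H ⊗[k] L) (a : A) (t : A ⊗[k] L) (lam : L) :
    aM₁ actA st ((a ⊗ₜ[k] v) ⊗ₜ[k] aR (t ⊗ₜ[k] lam))
      = aN₁ actA actL st ((a ⊗ₜ[k] LinearMap.lTensor H δ v) ⊗ₜ[k] (t ⊗ₜ[k] lam)) := by
  induction v using TensorProduct.induction_on with
  | zero => simp
  | tmul h n =>
    induction t using TensorProduct.induction_on with
    | zero => simp
    | tmul f n' =>
      rw [aR_tmul, aM₁_tmul, aG_tmul, aR_aR, ← mul_assoc, hqc n n', lTensor_tmul]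
      generalize δ n = w''
      induction w'' using TensorProduct.induction_on with
      | zero => simp
      | tmul z n'' =>
        rw [aQC_tmul, aN₁_tmul, aTA2_tmul, aE_tmul, aR_aR, aR_aR, mul_assoc]
      | add w₁ w₂ h₁ h₂ =>
        simp only [add_tmul, tmul_add, map_add, add_mul, mul_add, h₁, h₂]
    | add t₁ t₂ h₁ h₂ => simp only [add_tmul, tmul_add, map_add, h₁, h₂]
  | add v₁ v₂ h₁ h₂ => simp only [add_tmul, tmul_add, map_add, h₁, h₂]

lemma B31 (hqc : ∀ m n : L, m * n = aQC actL (δ m ⊗ₜ[k] n))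
    (v w : H ⊗[k] L) (a b c : A) (ℓ₃ : L) :
    aM₁ actA st ((a ⊗ₜ[k] v) ⊗ₜ[k] aR (aG actA st ((b ⊗ₜ[k] w) ⊗ₜ[k] c) ⊗ₜ[k] ℓ₃))
      = aN₁ actA actL st ((a ⊗ₜ[k] LinearMap.lTensor H δ v) ⊗ₜ[k]
          aτst actA st (w ⊗ₜ[k] ((b ⊗ₜ[k] c) ⊗ₜ[k] ℓ₃))) := by
  induction w using TensorProduct.induction_on with
  | zero => simp
  | tmul g n₂ =>
    rw [aG_tmul, aR_aR, aτst_tmul, B31core actA actL δ st hqc]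
  | add w₁ w₂ h₁ h₂ => simp only [add_tmul, tmul_add, map_add, h₁, h₂]

noncomputable def aN₂ : (A ⊗[k] (H ⊗[k] L)) ⊗[k] ((A ⊗[k] L) ⊗[k] L) →ₗ[k] A ⊗[k] L :=
  aR ∘ₗ (LinearMap.rTensor L (aR ∘ₗ (LinearMap.rTensor L
      (aE st ∘ₗ (LinearMap.lTensor A (tensorAction k actA actL)))))) ∘ₗ
    (LinearMap.rTensor L ((TensorProduct.assoc k A (H ⊗[k] (A ⊗[k] L)) L).symm.toLinearMap ∘ₗ
      (LinearMap.lTensor A (rot3 k H L (A ⊗[k] L))) ∘ₗ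
      (TensorProduct.assoc k A (H ⊗[k] L) (A ⊗[k] L)).toLinearMap)) ∘ₗ
    (TensorProduct.assoc k (A ⊗[k] (H ⊗[k] L)) (A ⊗[k] L) L).symm.toLinearMap

@[simp] lemma aN₂_tmul (a : A) (c' : H) (n'' : L) (t : A ⊗[k] L) (lam : L) :
    aN₂ actA actL st ((a ⊗ₜ[k] (c' ⊗ₜ[k] n'')) ⊗ₜ[k] (t ⊗ₜ[k] lam))
      = aR (aR (aE st (a ⊗ₜ[k] tensorAction k actA actL (c' ⊗ₜ[k] t)) ⊗ₜ[k] n'') ⊗ₜ[k] lam) := by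
  simp [aN₂, rot3]

lemma B32 (T : H ⊗[k] L) (a : A) (W : (A ⊗[k] L) ⊗[k] L) :
    aN₁ actA actL st ((a ⊗ₜ[k] (TensorProduct.assoc k H H L)
        (LinearMap.rTensor L (comul (R := k)) T)) ⊗ₜ[k] W)
      = aN₂ actA actL st ((a ⊗ₜ[k] T) ⊗ₜ[k] W) := by
  induction W using TensorProduct.induction_on with
  | zero => simp
  | tmul t lam =>
    induction T using TensorProduct.induction_on with
    | zero => simp
    | tmul c' n'' =>
      rw [rTensor_tmul, aN₂_tmul, tensorAction_tmul]
      generalize comul (R := k) c' = vp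
      induction vp using TensorProduct.induction_on with
      | zero => simp
      | tmul h z => rw [assoc_tmul, aN₁_tmul]
      | add v₁ v₂ h₁ h₂ => simp only [add_tmul, tmul_add, map_add, h₁, h₂]
    | add T₁ T₂ h₁ h₂ => simp only [add_tmul, tmul_add, map_add, h₁, h₂]
  | add W₁ W₂ h₁ h₂ => simp only [add_tmul, tmul_add, map_add, h₁, h₂]

/-- `aτ`: like `aτst` without `st` -/
noncomputable def aτ : (H ⊗[k] L) ⊗[k] ((A ⊗[k] A) ⊗[k] L) →ₗ[k] (A ⊗[k] A) ⊗[k] L :=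
  (TensorProduct.map (aρ actA) (LinearMap.mul' k L)) ∘ₗ
    (TensorProduct.tensorTensorTensorComm k H L (A ⊗[k] A) L).toLinearMap

@[simp] lemma aτ_tmul (g : H) (n₂ : L) (b c : A) (ℓ₃ : L) :
    aτ actA ((g ⊗ₜ[k] n₂) ⊗ₜ[k] ((b ⊗ₜ[k] c) ⊗ₜ[k] ℓ₃))
      = (b ⊗ₜ[k] actA (g ⊗ₜ[k] c)) ⊗ₜ[k] (n₂ * ℓ₃) := by
  simp [aτ]

noncomputable def aLf : (A ⊗[k] (H ⊗[k] L)) ⊗[k]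
    ((H ⊗[k] L) ⊗[k] ((A ⊗[k] A) ⊗[k] L)) →ₗ[k] A ⊗[k] L :=
  (aR ∘ₗ (LinearMap.rTensor L (aR ∘ₗ (LinearMap.rTensor L
      (aE st ∘ₗ (LinearMap.lTensor A (st ∘ₗ tensorAction k actA actA)))))) ∘ₗ
    (LinearMap.rTensor L ((TensorProduct.assoc k A (H ⊗[k] (A ⊗[k] A)) L).symm.toLinearMap ∘ₗ
      (LinearMap.lTensor A (rot3 k H L (A ⊗[k] A))) ∘ₗ
      (TensorProduct.assoc k A (H ⊗[k] L) (A ⊗[k] A)).toLinearMap)) ∘ₗ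
    (TensorProduct.assoc k (A ⊗[k] (H ⊗[k] L)) (A ⊗[k] A) L).symm.toLinearMap) ∘ₗ
    (LinearMap.lTensor (A ⊗[k] (H ⊗[k] L)) (aτ actA))

@[simp] lemma aLf_tmul (a : A) (c' : H) (n'' : L) (g : H) (n₂ : L) (b c : A) (ℓ₃ : L) :
    aLf actA st ((a ⊗ₜ[k] (c' ⊗ₜ[k] n'')) ⊗ₜ[k] ((g ⊗ₜ[k] n₂) ⊗ₜ[k] ((b ⊗ₜ[k] c) ⊗ₜ[k] ℓ₃)))
      = aR (aR (aE st (a ⊗ₜ[k] st (tensorAction k actA actA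
          (c' ⊗ₜ[k] (b ⊗ₜ[k] actA (g ⊗ₜ[k] c))))) ⊗ₜ[k] n'') ⊗ₜ[k] (n₂ * ℓ₃)) := by
  simp [aLf, rot3]

lemma B33 (hst : ∀ (x : H) (s : A ⊗[k] A),
      st (tensorAction k actA actA (x ⊗ₜ[k] s))
        = tensorAction k actA actL (x ⊗ₜ[k] st s))
    (T w : H ⊗[k] L) (a b c : A) (ℓ₃ : L) :
    aN₂ actA actL st ((a ⊗ₜ[k] T) ⊗ₜ[k] aτst actA st (w ⊗ₜ[k] ((b ⊗ₜ[k] c) ⊗ₜ[k] ℓ₃)))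
      = aLf actA st ((a ⊗ₜ[k] T) ⊗ₜ[k] (w ⊗ₜ[k] ((b ⊗ₜ[k] c) ⊗ₜ[k] ℓ₃))) := by
  induction T using TensorProduct.induction_on with
  | zero => simp
  | tmul c' n'' =>
    induction w using TensorProduct.induction_on with
    | zero => simp
    | tmul g n₂ => rw [aτst_tmul, aN₂_tmul, aLf_tmul, ← hst]
    | add w₁ w₂ h₁ h₂ => simp only [add_tmul, tmul_add, map_add, h₁, h₂]
  | add T₁ T₂ h₁ h₂ => simp only [add_tmul, tmul_add, map_add, h₁, h₂]

lemma B34 (actA_mul : ∀ (x y : H) (a : A),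
      actA ((x * y) ⊗ₜ[k] a) = actA (x ⊗ₜ[k] actA (y ⊗ₜ[k] a)))
    (T w : H ⊗[k] L) (a b c : A) (ℓ₃ : L) :
    aR (aL6 actA st ((TensorProduct.assoc k H H L)
          (LinearMap.rTensor L (comul (R := k)) T) ⊗ₜ[k]
        (w ⊗ₜ[k] ((a ⊗ₜ[k] b) ⊗ₜ[k] c))) ⊗ₜ[k] ℓ₃)
      = aLf actA st ((a ⊗ₜ[k] T) ⊗ₜ[k] (w ⊗ₜ[k] ((b ⊗ₜ[k] c) ⊗ₜ[k] ℓ₃))) := by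
  induction T using TensorProduct.induction_on with
  | zero => simp
  | tmul c' n'' =>
    induction w using TensorProduct.induction_on with
    | zero => simp
    | tmul g n₂ =>
      rw [rTensor_tmul, aLf_tmul, tensorAction_tmul]
      generalize comul (R := k) c' = vp
      induction vp using TensorProduct.induction_on with
      | zero => simp
      | tmul h z =>
        rw [assoc_tmul, aL6_tmul, aTA2_tmul, actA_mul, aR_aR, aR_aR]
      | add v₁ v₂ h₁ h₂ => simp only [add_tmul, tmul_add, map_add, h₁, h₂]
    | add w₁ w₂ h₁ h₂ => simp only [add_tmul, tmul_add, map_add, h₁, h₂]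
  | add T₁ T₂ h₁ h₂ => simp only [add_tmul, tmul_add, map_add, h₁, h₂]

end AuxST9H

section AuxST9I

open TensorProduct LinearMap Coalgebra

variable {k : Type*} [CommRing k] {H : Type*} [Ring H] [HopfAlgebra k H]
  {L : Type*} [Ring L] [Algebra k L] {A : Type*} [AddCommGroup A] [Module k A]

variable (actA : H ⊗[k] A →ₗ[k] A) (actL : H ⊗[k] L →ₗ[k] L)
  (δ : L →ₗ[k] H ⊗[k] L) (st : A ⊗[k] A →ₗ[k] A ⊗[k] L)

lemma forward_assoc
    (δ_alg : ∀ ℓ₁ ℓ₂ : L, δ (ℓ₁ * ℓ₂) = δ ℓ₁ * δ ℓ₂)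
    (δ_coassoc : (LinearMap.rTensor L (Coalgebra.comul (R := k))) ∘ₗ δ
      = (TensorProduct.assoc k H H L).symm.toLinearMap ∘ₗ (LinearMap.lTensor H δ) ∘ₗ δ)
    (hbase2 : LinearMap.mul' k L
      = (LinearMap.mul' k L) ∘ₗ (LinearMap.rTensor L actL) ∘ₗ (rot3 k H L L) ∘ₗ
          (LinearMap.rTensor L δ))
    (actA_mul : ∀ (x y : H) (a : A),
      actA ((x * y) ⊗ₜ[k] a) = actA (x ⊗ₜ[k] actA (y ⊗ₜ[k] a)))
    (st_equiv : st ∘ₗ (tensorAction k actA actA)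
      = (tensorAction k actA actL) ∘ₗ (LinearMap.lTensor H st))
    (hsh : shiftedL k δ actA st = shiftedR k st) :
    (inducedMul k δ actA st) ∘ₗ
        (LinearMap.rTensor (A ⊗[k] L) (inducedMul k δ actA st))
      = (inducedMul k δ actA st) ∘ₗ
          (LinearMap.lTensor (A ⊗[k] L) (inducedMul k δ actA st)) ∘ₗ
          (TensorProduct.assoc k (A ⊗[k] L) (A ⊗[k] L) (A ⊗[k] L)).toLinearMap := by
  have hqc : ∀ m n : L, m * n = aQC actL (δ m ⊗ₜ[k] n) := by
    intro m n
    have h := DFunLike.congr_fun hbase2 (m ⊗ₜ[k] n)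
    simpa [aQC] using h
  have hst : ∀ (x : H) (s : A ⊗[k] A),
      st (tensorAction k actA actA (x ⊗ₜ[k] s))
        = tensorAction k actA actL (x ⊗ₜ[k] st s) := by
    intro x s
    have h := DFunLike.congr_fun st_equiv (x ⊗ₜ[k] s)
    simpa using h
  have hdc : ∀ ℓ : L, LinearMap.lTensor H δ (δ ℓ)
      = (TensorProduct.assoc k H H L)
          (LinearMap.rTensor L (Coalgebra.comul (R := k)) (δ ℓ)) := by
    intro ℓ
    have h := DFunLike.congr_fun δ_coassoc ℓ
    simp only [coe_comp, Function.comp_apply, LinearEquiv.coe_coe] at h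
    rw [h, LinearEquiv.apply_symm_apply]
  have hshe : ∀ a b c : A,
      aD actA δ st (st (a ⊗ₜ[k] b) ⊗ₜ[k] c) = aE st (a ⊗ₜ[k] st (b ⊗ₜ[k] c)) := by
    intro a b c
    have h := DFunLike.congr_fun hsh ((a ⊗ₜ[k] b) ⊗ₜ[k] c)
    rwa [shiftedL_tmul, shiftedR_tmul] at h
  apply TensorProduct.ext'
  intro x r
  induction x using TensorProduct.induction_on with
  | zero => simp
  | tmul p q =>
    induction p using TensorProduct.induction_on with
    | zero => simp
    | tmul a ℓ₁ =>
      induction q using TensorProduct.induction_on with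
      | zero => simp
      | tmul b ℓ₂ =>
        induction r using TensorProduct.induction_on with
        | zero => simp
        | tmul c ℓ₃ =>
          simp only [coe_comp, Function.comp_apply, rTensor_tmul, LinearEquiv.coe_coe,
            assoc_tmul, lTensor_tmul]
          rw [mu_tmul, mu_left, A31 actA δ st δ_alg actA_mul,
            A32 actA δ st δ_alg actA_mul,
            A33 actA δ st hshe, hdc ℓ₁, B34 actA st actA_mul,
            mu_tmul, mu_right, B31 actA actL δ st hqc, hdc ℓ₁,
            B32 actA actL st, B33 actA actL st hst]
        | add r₁ r₂ h₁ h₂ => simp only [tmul_add, map_add, h₁, h₂]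
      | add q₁ q₂ h₁ h₂ => simp only [add_tmul, tmul_add, map_add, h₁, h₂]
    | add p₁ p₂ h₁ h₂ => simp only [add_tmul, tmul_add, map_add, h₁, h₂]
  | add x₁ x₂ h₁ h₂ => simp only [add_tmul, map_add, h₁, h₂]

end AuxST9I

section AuxST9J

open TensorProduct LinearMap Coalgebra

variable {k : Type*} [CommRing k] {H : Type*} [Ring H] [HopfAlgebra k H]
  {L : Type*} [Ring L] [Algebra k L] {A : Type*} [AddCommGroup A] [Module k A]

variable (actA : H ⊗[k] A →ₗ[k] A) (actL : H ⊗[k] L →ₗ[k] L)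
  (δ : L →ₗ[k] H ⊗[k] L) (st : A ⊗[k] A →ₗ[k] A ⊗[k] L)

noncomputable def aT1 : ((H ⊗[k] H) ⊗[k] H) ⊗[k] ((A ⊗[k] L) ⊗[k] L) →ₗ[k] A ⊗[k] L :=
  aR ∘ₗ (TensorProduct.map (aTA2 actA actL) actL) ∘ₗ
    (TensorProduct.tensorTensorTensorComm k (H ⊗[k] H) H (A ⊗[k] L) L).toLinearMap

@[simp] lemma aT1_tmul (vp : H ⊗[k] H) (z₃ : H) (s : A ⊗[k] L) (m : L) :
    aT1 actA actL ((vp ⊗ₜ[k] z₃) ⊗ₜ[k] (s ⊗ₜ[k] m))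
      = aR (aTA2 actA actL (vp ⊗ₜ[k] s) ⊗ₜ[k] actL (z₃ ⊗ₜ[k] m)) := by
  simp [aT1]

lemma E1 (h_alg : ∀ (z : H) (m n : L),
      actL (z ⊗ₜ[k] (m * n)) = aMA actL (comul (R := k) z ⊗ₜ[k] (m ⊗ₜ[k] n)))
    (u : H ⊗[k] H) (t : A ⊗[k] L) (m : L) :
    aTA2 actA actL (u ⊗ₜ[k] aR (t ⊗ₜ[k] m))
      = aT1 actA actL ((TensorProduct.assoc k H H H).symm
          (LinearMap.lTensor H (comul (R := k)) u) ⊗ₜ[k] (t ⊗ₜ[k] m)) := by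
  induction u using TensorProduct.induction_on with
  | zero => simp
  | tmul z₁ z₂ =>
    induction t using TensorProduct.induction_on with
    | zero => simp
    | tmul e m' =>
      rw [aR_tmul, aTA2_tmul, h_alg, lTensor_tmul]
      generalize comul (R := k) z₂ = v
      induction v using TensorProduct.induction_on with
      | zero => simp
      | tmul v₁ v₂ => simp
      | add v₁ v₂ h₁ h₂ => simp only [add_tmul, tmul_add, map_add, h₁, h₂]
    | add t₁ t₂ h₁ h₂ => simp only [add_tmul, tmul_add, map_add, h₁, h₂]
  | add u₁ u₂ h₁ h₂ => simp only [add_tmul, tmul_add, map_add, h₁, h₂]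

/-- `Gcore ((a ⊗ (y⊗m)) ⊗ b) = st (a ⊗ y▷b) ⊗ m` -/
noncomputable def aGcore : (A ⊗[k] (H ⊗[k] L)) ⊗[k] A →ₗ[k] (A ⊗[k] L) ⊗[k] L :=
  (LinearMap.rTensor L st) ∘ₗ (TensorProduct.assoc k A A L).symm.toLinearMap ∘ₗ
    (LinearMap.lTensor A (aQ actA)) ∘ₗ (TensorProduct.assoc k A (H ⊗[k] L) A).toLinearMap

@[simp] lemma aGcore_tmul (a : A) (y : H) (m : L) (b : A) :
    aGcore actA st ((a ⊗ₜ[k] (y ⊗ₜ[k] m)) ⊗ₜ[k] b)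
      = st (a ⊗ₜ[k] actA (y ⊗ₜ[k] b)) ⊗ₜ[k] m := by
  simp [aGcore]

noncomputable def aT2 : ((H ⊗[k] (H ⊗[k] H)) ⊗[k] H) ⊗[k]
    ((A ⊗[k] (H ⊗[k] L)) ⊗[k] (A ⊗[k] L)) →ₗ[k] A ⊗[k] L :=
  (aB actL ∘ₗ
    (LinearMap.rTensor (H ⊗[k] L)
      (aB actL ∘ₗ (LinearMap.rTensor (H ⊗[k] L) (aTA2 actA actL)) ∘ₗ
        (TensorProduct.tensorTensorTensorComm k (H ⊗[k] H) H (A ⊗[k] L) L).toLinearMap ∘ₗ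
        (LinearMap.rTensor ((A ⊗[k] L) ⊗[k] L)
          (TensorProduct.assoc k H H H).symm.toLinearMap))) ∘ₗ
    (TensorProduct.tensorTensorTensorComm k (H ⊗[k] (H ⊗[k] H)) H
      ((A ⊗[k] L) ⊗[k] L) L).toLinearMap) ∘ₗ
    (LinearMap.lTensor ((H ⊗[k] (H ⊗[k] H)) ⊗[k] H)
      ((LinearMap.rTensor L (aGcore actA st)) ∘ₗ
        (TensorProduct.assoc k (A ⊗[k] (H ⊗[k] L)) A L).symm.toLinearMap))

@[simp] lemma aT2_tmul (z₁ z₂ z₃ z₄ : H) (a : A) (y : H) (m : L) (b : A) (ℓ₂ : L) :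
    aT2 actA actL st (((z₁ ⊗ₜ[k] (z₂ ⊗ₜ[k] z₃)) ⊗ₜ[k] z₄) ⊗ₜ[k]
        ((a ⊗ₜ[k] (y ⊗ₜ[k] m)) ⊗ₜ[k] (b ⊗ₜ[k] ℓ₂)))
      = aB actL (aB actL (aTA2 actA actL ((z₁ ⊗ₜ[k] z₂) ⊗ₜ[k]
          st (a ⊗ₜ[k] actA (y ⊗ₜ[k] b))) ⊗ₜ[k] (z₃ ⊗ₜ[k] m)) ⊗ₜ[k] (z₄ ⊗ₜ[k] ℓ₂)) := by
  simp [aT2]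

lemma E2 (h_alg : ∀ (z : H) (m n : L),
      actL (z ⊗ₜ[k] (m * n)) = aMA actL (comul (R := k) z ⊗ₜ[k] (m ⊗ₜ[k] n)))
    (U : (H ⊗[k] H) ⊗[k] H) (w : H ⊗[k] L) (a b : A) (ℓ₂ : L) :
    aT1 actA actL (U ⊗ₜ[k] (aG actA st ((a ⊗ₜ[k] w) ⊗ₜ[k] b) ⊗ₜ[k] ℓ₂))
      = aT2 actA actL st ((LinearMap.rTensor H (LinearMap.lTensor H (comul (R := k))) U)
          ⊗ₜ[k] ((a ⊗ₜ[k] w) ⊗ₜ[k] (b ⊗ₜ[k] ℓ₂))) := by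
  induction U using TensorProduct.induction_on with
  | zero => simp
  | tmul u' z₃ =>
    induction u' using TensorProduct.induction_on with
    | zero => simp
    | tmul z₁ z₂ =>
      induction w using TensorProduct.induction_on with
      | zero => simp
      | tmul y m =>
        rw [aT1_tmul, aG_tmul, E1 actA actL h_alg]
        simp only [lTensor_tmul, rTensor_tmul]
        generalize comul (R := k) z₂ = v
        induction v using TensorProduct.induction_on with
        | zero => simp
        | tmul v₁ v₂ => simp
        | add v₁ v₂ h₁ h₂ => simp only [add_tmul, tmul_add, map_add, h₁, h₂]
      | add w₁ w₂ h₁ h₂ => simp only [add_tmul, tmul_add, map_add, h₁, h₂]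
    | add u₁ u₂ h₁ h₂ => simp only [add_tmul, tmul_add, map_add, h₁, h₂]
  | add U₁ U₂ h₁ h₂ => simp only [add_tmul, tmul_add, map_add, h₁, h₂]

end AuxST9J

section AuxST9K

open TensorProduct LinearMap Coalgebra

variable {k : Type*} [CommRing k] {H : Type*} [Ring H] [HopfAlgebra k H]
  {L : Type*} [Ring L] [Algebra k L] {A : Type*} [AddCommGroup A] [Module k A]

variable (actA : H ⊗[k] A →ₗ[k] A) (actL : H ⊗[k] L →ₗ[k] L)
  (δ : L →ₗ[k] H ⊗[k] L) (st : A ⊗[k] A →ₗ[k] A ⊗[k] L)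

noncomputable def aXi' : (((H ⊗[k] H) ⊗[k] H) ⊗[k] H) ⊗[k]
    ((A ⊗[k] (H ⊗[k] L)) ⊗[k] (A ⊗[k] L)) →ₗ[k] A ⊗[k] L :=
  (aB actL ∘ₗ
    (LinearMap.rTensor (H ⊗[k] L)
      (aB actL ∘ₗ (LinearMap.rTensor (H ⊗[k] L) (aTA2 actA actL)) ∘ₗ
        (TensorProduct.tensorTensorTensorComm k (H ⊗[k] H) H (A ⊗[k] L) L).toLinearMap)) ∘ₗ
    (TensorProduct.tensorTensorTensorComm k ((H ⊗[k] H) ⊗[k] H) H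
      ((A ⊗[k] L) ⊗[k] L) L).toLinearMap) ∘ₗ
    (LinearMap.lTensor (((H ⊗[k] H) ⊗[k] H) ⊗[k] H)
      ((LinearMap.rTensor L (aGcore actA st)) ∘ₗ
        (TensorProduct.assoc k (A ⊗[k] (H ⊗[k] L)) A L).symm.toLinearMap))

@[simp] lemma aXi'_tmul (vp : H ⊗[k] H) (g₃ g₄ : H) (a : A) (y : H) (m : L) (b : A) (ℓ₂ : L) :
    aXi' actA actL st (((vp ⊗ₜ[k] g₃) ⊗ₜ[k] g₄) ⊗ₜ[k]
        ((a ⊗ₜ[k] (y ⊗ₜ[k] m)) ⊗ₜ[k] (b ⊗ₜ[k] ℓ₂)))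
      = aB actL (aB actL (aTA2 actA actL (vp ⊗ₜ[k]
          st (a ⊗ₜ[k] actA (y ⊗ₜ[k] b))) ⊗ₜ[k] (g₃ ⊗ₜ[k] m)) ⊗ₜ[k] (g₄ ⊗ₜ[k] ℓ₂)) := by
  simp [aXi']

/-- `Gcore'` : like `aGcore` without `st`. -/
noncomputable def aGcore' : (A ⊗[k] (H ⊗[k] L)) ⊗[k] A →ₗ[k] (A ⊗[k] A) ⊗[k] L :=
  (TensorProduct.assoc k A A L).symm.toLinearMap ∘ₗ
    (LinearMap.lTensor A (aQ actA)) ∘ₗ (TensorProduct.assoc k A (H ⊗[k] L) A).toLinearMap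

@[simp] lemma aGcore'_tmul (a : A) (y : H) (m : L) (b : A) :
    aGcore' actA ((a ⊗ₜ[k] (y ⊗ₜ[k] m)) ⊗ₜ[k] b)
      = (a ⊗ₜ[k] actA (y ⊗ₜ[k] b)) ⊗ₜ[k] m := by
  simp [aGcore']

noncomputable def aXi : (((H ⊗[k] H) ⊗[k] H) ⊗[k] H) ⊗[k]
    ((A ⊗[k] (H ⊗[k] L)) ⊗[k] (A ⊗[k] L)) →ₗ[k] A ⊗[k] L :=
  (aB actL ∘ₗ
    (LinearMap.rTensor (H ⊗[k] L)
      (aB actL ∘ₗ (LinearMap.rTensor (H ⊗[k] L) (st ∘ₗ aTA2 actA actA)) ∘ₗ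
        (TensorProduct.tensorTensorTensorComm k (H ⊗[k] H) H (A ⊗[k] A) L).toLinearMap)) ∘ₗ
    (TensorProduct.tensorTensorTensorComm k ((H ⊗[k] H) ⊗[k] H) H
      ((A ⊗[k] A) ⊗[k] L) L).toLinearMap) ∘ₗ
    (LinearMap.lTensor (((H ⊗[k] H) ⊗[k] H) ⊗[k] H)
      ((LinearMap.rTensor L (aGcore' actA)) ∘ₗ
        (TensorProduct.assoc k (A ⊗[k] (H ⊗[k] L)) A L).symm.toLinearMap))

@[simp] lemma aXi_tmul (vp : H ⊗[k] H) (g₃ g₄ : H) (a : A) (y : H) (m : L) (b : A) (ℓ₂ : L) :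
    aXi actA actL st (((vp ⊗ₜ[k] g₃) ⊗ₜ[k] g₄) ⊗ₜ[k]
        ((a ⊗ₜ[k] (y ⊗ₜ[k] m)) ⊗ₜ[k] (b ⊗ₜ[k] ℓ₂)))
      = aB actL (aB actL (st (aTA2 actA actA (vp ⊗ₜ[k]
          (a ⊗ₜ[k] actA (y ⊗ₜ[k] b)))) ⊗ₜ[k] (g₃ ⊗ₜ[k] m)) ⊗ₜ[k] (g₄ ⊗ₜ[k] ℓ₂)) := by
  simp [aXi]

lemma E5 (Y : ((H ⊗[k] H) ⊗[k] H) ⊗[k] H) (a : A) (w : H ⊗[k] L) (b : A) (ℓ₂ : L) :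
    aT2 actA actL st ((LinearMap.rTensor H (TensorProduct.assoc k H H H).toLinearMap Y)
        ⊗ₜ[k] ((a ⊗ₜ[k] w) ⊗ₜ[k] (b ⊗ₜ[k] ℓ₂)))
      = aXi' actA actL st (Y ⊗ₜ[k] ((a ⊗ₜ[k] w) ⊗ₜ[k] (b ⊗ₜ[k] ℓ₂))) := by
  induction Y using TensorProduct.induction_on with
  | zero => simp
  | tmul Y' g₄ =>
    induction Y' using TensorProduct.induction_on with
    | zero => simp
    | tmul vp g₃ =>
      induction vp using TensorProduct.induction_on with
      | zero => simp
      | tmul v₁ v₂ =>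
        induction w using TensorProduct.induction_on with
        | zero => simp
        | tmul y m => simp
        | add w₁ w₂ h₁ h₂ => simp only [add_tmul, tmul_add, map_add, h₁, h₂]
      | add v₁ v₂ h₁ h₂ => simp only [add_tmul, tmul_add, map_add, h₁, h₂]
    | add Y₁ Y₂ h₁ h₂ => simp only [add_tmul, tmul_add, map_add, h₁, h₂]
  | add Y₁ Y₂ h₁ h₂ => simp only [add_tmul, tmul_add, map_add, h₁, h₂]

lemma E6 (hst : ∀ (x : H) (s : A ⊗[k] A),
      st (tensorAction k actA actA (x ⊗ₜ[k] s))
        = tensorAction k actA actL (x ⊗ₜ[k] st s))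
    (V : (H ⊗[k] H) ⊗[k] H) (a : A) (w : H ⊗[k] L) (b : A) (ℓ₂ : L) :
    aXi' actA actL st ((LinearMap.rTensor H (LinearMap.rTensor H (comul (R := k))) V)
        ⊗ₜ[k] ((a ⊗ₜ[k] w) ⊗ₜ[k] (b ⊗ₜ[k] ℓ₂)))
      = aXi actA actL st ((LinearMap.rTensor H (LinearMap.rTensor H (comul (R := k))) V)
          ⊗ₜ[k] ((a ⊗ₜ[k] w) ⊗ₜ[k] (b ⊗ₜ[k] ℓ₂))) := by
  induction V using TensorProduct.induction_on with
  | zero => simp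
  | tmul u' g₄ =>
    induction u' using TensorProduct.induction_on with
    | zero => simp
    | tmul c g₃ =>
      induction w using TensorProduct.induction_on with
      | zero => simp
      | tmul y m =>
        simp only [rTensor_tmul, aXi'_tmul, aXi_tmul, ← tensorAction_tmul]
        rw [← hst]
      | add w₁ w₂ h₁ h₂ => simp only [add_tmul, tmul_add, map_add, h₁, h₂]
    | add u₁ u₂ h₁ h₂ => simp only [add_tmul, tmul_add, map_add, h₁, h₂]
  | add V₁ V₂ h₁ h₂ => simp only [add_tmul, tmul_add, map_add, h₁, h₂]

end AuxST9K

section AuxST9L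

open TensorProduct LinearMap Coalgebra

variable {k : Type*} [CommRing k] {H : Type*} [Ring H] [HopfAlgebra k H]
  {L : Type*} [Ring L] [Algebra k L] {A : Type*} [AddCommGroup A] [Module k A]

variable (actA : H ⊗[k] A →ₗ[k] A) (actL : H ⊗[k] L →ₗ[k] L)
  (δ : L →ₗ[k] H ⊗[k] L) (st : A ⊗[k] A →ₗ[k] A ⊗[k] L)

noncomputable def aF1 : ((H ⊗[k] H) ⊗[k] (H ⊗[k] H)) ⊗[k]
    ((A ⊗[k] L) ⊗[k] (A ⊗[k] L)) →ₗ[k] A ⊗[k] L :=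
  inducedMul k δ actA st ∘ₗ
    (TensorProduct.map (aTA2 actA actL) (aTA2 actA actL)) ∘ₗ
    (TensorProduct.tensorTensorTensorComm k (H ⊗[k] H) (H ⊗[k] H)
      (A ⊗[k] L) (A ⊗[k] L)).toLinearMap

@[simp] lemma aF1_tmul (v w : H ⊗[k] H) (p q : A ⊗[k] L) :
    aF1 actA actL δ st ((v ⊗ₜ[k] w) ⊗ₜ[k] (p ⊗ₜ[k] q))
      = inducedMul k δ actA st
          (aTA2 actA actL (v ⊗ₜ[k] p) ⊗ₜ[k] aTA2 actA actL (w ⊗ₜ[k] q)) := by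
  simp [aF1]

lemma F1 (u : H ⊗[k] H) (p q : A ⊗[k] L) :
    inducedMul k δ actA st
        (TensorProduct.map (tensorAction k actA actL) (tensorAction k actA actL)
          (TensorProduct.tensorTensorTensorComm k H H (A ⊗[k] L) (A ⊗[k] L)
            (u ⊗ₜ[k] (p ⊗ₜ[k] q))))
      = aF1 actA actL δ st ((TensorProduct.map (comul (R := k)) (comul (R := k)) u)
          ⊗ₜ[k] (p ⊗ₜ[k] q)) := by
  induction u using TensorProduct.induction_on with
  | zero => simp
  | tmul x₁ x₂ =>
    simp only [tensorTensorTensorComm_tmul, map_tmul, aF1_tmul, tensorAction_tmul]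
  | add u₁ u₂ h₁ h₂ => simp only [add_tmul, tmul_add, map_add, h₁, h₂]

lemma G_act (actA_mul : ∀ (x y : H) (a : A),
      actA ((x * y) ⊗ₜ[k] a) = actA (x ⊗ₜ[k] actA (y ⊗ₜ[k] a)))
    (a' : A) (w' : H ⊗[k] L) (y : H) (b : A) :
    aG actA st ((a' ⊗ₜ[k] w') ⊗ₜ[k] actA (y ⊗ₜ[k] b))
      = aG actA st ((a' ⊗ₜ[k] aP1' (w' ⊗ₜ[k] y)) ⊗ₜ[k] b) := by
  induction w' using TensorProduct.induction_on with
  | zero => simp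
  | tmul h m => rw [aG_tmul, aP1'_tmul, aG_tmul, actA_mul]
  | add w₁ w₂ h₁ h₂ => simp only [add_tmul, tmul_add, map_add, h₁, h₂]

noncomputable def aΦ₂ : ((H ⊗[k] (H ⊗[k] H)) ⊗[k] H) ⊗[k]
    ((A ⊗[k] L) ⊗[k] (A ⊗[k] L)) →ₗ[k] A ⊗[k] L :=
  (aB actL ∘ₗ
    (LinearMap.rTensor (H ⊗[k] L)
      (aG actA st ∘ₗ
        (LinearMap.rTensor A (TensorProduct.map actA (aP1 actL δ))) ∘ₗ
        (LinearMap.rTensor A (TensorProduct.tensorTensorTensorComm k H (H ⊗[k] H)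
          A L).toLinearMap) ∘ₗ
        (TensorProduct.assoc k (H ⊗[k] (H ⊗[k] H)) (A ⊗[k] L) A).symm.toLinearMap)) ∘ₗ
    (TensorProduct.tensorTensorTensorComm k (H ⊗[k] (H ⊗[k] H)) H
      ((A ⊗[k] L) ⊗[k] A) L).toLinearMap) ∘ₗ
    (LinearMap.lTensor ((H ⊗[k] (H ⊗[k] H)) ⊗[k] H)
      (TensorProduct.assoc k (A ⊗[k] L) A L).symm.toLinearMap)

@[simp] lemma aΦ₂_tmul (z₁ : H) (vmid : H ⊗[k] H) (y₂ : H) (a : A) (ℓ₁ : L) (b : A) (ℓ₂ : L) :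
    aΦ₂ actA actL δ st (((z₁ ⊗ₜ[k] vmid) ⊗ₜ[k] y₂) ⊗ₜ[k]
        ((a ⊗ₜ[k] ℓ₁) ⊗ₜ[k] (b ⊗ₜ[k] ℓ₂)))
      = aB actL (aG actA st ((actA (z₁ ⊗ₜ[k] a) ⊗ₜ[k] aP1 actL δ (vmid ⊗ₜ[k] ℓ₁))
          ⊗ₜ[k] b) ⊗ₜ[k] (y₂ ⊗ₜ[k] ℓ₂)) := by
  simp [aΦ₂]

lemma F2 (actA_mul : ∀ (x y : H) (a : A),
      actA ((x * y) ⊗ₜ[k] a) = actA (x ⊗ₜ[k] actA (y ⊗ₜ[k] a)))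
    (W : (H ⊗[k] H) ⊗[k] (H ⊗[k] H)) (a : A) (ℓ₁ : L) (b : A) (ℓ₂ : L) :
    aF1 actA actL δ st (W ⊗ₜ[k] ((a ⊗ₜ[k] ℓ₁) ⊗ₜ[k] (b ⊗ₜ[k] ℓ₂)))
      = aΦ₂ actA actL δ st
          ((LinearMap.rTensor H (TensorProduct.assoc k H H H).toLinearMap
            ((TensorProduct.assoc k (H ⊗[k] H) H H).symm W)) ⊗ₜ[k]
            ((a ⊗ₜ[k] ℓ₁) ⊗ₜ[k] (b ⊗ₜ[k] ℓ₂))) := by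
  induction W using TensorProduct.induction_on with
  | zero => simp
  | tmul v w =>
    induction v using TensorProduct.induction_on with
    | zero => simp
    | tmul z₁ z₂ =>
      induction w using TensorProduct.induction_on with
      | zero => simp
      | tmul y₁ y₂ =>
        rw [aF1_tmul, aTA2_tmul, aTA2_tmul, mu_tmul, G_act actA st actA_mul,
          ← aP1_tmul, assoc_symm_tmul]
        simp only [rTensor_tmul, LinearEquiv.coe_coe, assoc_tmul, aΦ₂_tmul, aB_tmul]
      | add w₁ w₂ h₁ h₂ => simp only [add_tmul, tmul_add, map_add, h₁, h₂]
    | add v₁ v₂ h₁ h₂ => simp only [add_tmul, tmul_add, map_add, h₁, h₂]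
  | add W₁ W₂ h₁ h₂ => simp only [add_tmul, tmul_add, map_add, h₁, h₂]

noncomputable def aΦ₄ : ((H ⊗[k] (H ⊗[k] H)) ⊗[k] H) ⊗[k]
    ((A ⊗[k] (H ⊗[k] L)) ⊗[k] (A ⊗[k] L)) →ₗ[k] A ⊗[k] L :=
  (aB actL ∘ₗ
    (LinearMap.rTensor (H ⊗[k] L)
      (aG actA st ∘ₗ
        (LinearMap.rTensor A (TensorProduct.map actA (aP2 actL))) ∘ₗ
        (LinearMap.rTensor A (TensorProduct.tensorTensorTensorComm k H (H ⊗[k] H)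
          A (H ⊗[k] L)).toLinearMap) ∘ₗ
        (TensorProduct.assoc k (H ⊗[k] (H ⊗[k] H)) (A ⊗[k] (H ⊗[k] L)) A).symm.toLinearMap)) ∘ₗ
    (TensorProduct.tensorTensorTensorComm k (H ⊗[k] (H ⊗[k] H)) H
      ((A ⊗[k] (H ⊗[k] L)) ⊗[k] A) L).toLinearMap) ∘ₗ
    (LinearMap.lTensor ((H ⊗[k] (H ⊗[k] H)) ⊗[k] H)
      (TensorProduct.assoc k (A ⊗[k] (H ⊗[k] L)) A L).symm.toLinearMap)

@[simp] lemma aΦ₄_tmul (z₁ : H) (vmid : H ⊗[k] H) (y₂ : H) (a : A) (w : H ⊗[k] L)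
    (b : A) (ℓ₂ : L) :
    aΦ₄ actA actL st (((z₁ ⊗ₜ[k] vmid) ⊗ₜ[k] y₂) ⊗ₜ[k]
        ((a ⊗ₜ[k] w) ⊗ₜ[k] (b ⊗ₜ[k] ℓ₂)))
      = aB actL (aG actA st ((actA (z₁ ⊗ₜ[k] a) ⊗ₜ[k] aP2 actL (vmid ⊗ₜ[k] w))
          ⊗ₜ[k] b) ⊗ₜ[k] (y₂ ⊗ₜ[k] ℓ₂)) := by
  simp [aΦ₄]

lemma F3 (hb1e : ∀ (c : H) (ℓ : L),
      aP1 actL δ (comul (R := k) c ⊗ₜ[k] ℓ) = aP2 actL (comul (R := k) c ⊗ₜ[k] δ ℓ))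
    (V : (H ⊗[k] H) ⊗[k] H) (a : A) (ℓ₁ : L) (b : A) (ℓ₂ : L) :
    aΦ₂ actA actL δ st ((LinearMap.rTensor H (LinearMap.lTensor H (comul (R := k))) V)
        ⊗ₜ[k] ((a ⊗ₜ[k] ℓ₁) ⊗ₜ[k] (b ⊗ₜ[k] ℓ₂)))
      = aΦ₄ actA actL st ((LinearMap.rTensor H (LinearMap.lTensor H (comul (R := k))) V)
          ⊗ₜ[k] ((a ⊗ₜ[k] δ ℓ₁) ⊗ₜ[k] (b ⊗ₜ[k] ℓ₂))) := by
  induction V using TensorProduct.induction_on with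
  | zero => simp
  | tmul u' g₄ =>
    induction u' using TensorProduct.induction_on with
    | zero => simp
    | tmul z₁ c => simp only [rTensor_tmul, lTensor_tmul, aΦ₂_tmul, aΦ₄_tmul, hb1e]
    | add u₁ u₂ h₁ h₂ => simp only [add_tmul, tmul_add, map_add, h₁, h₂]
  | add V₁ V₂ h₁ h₂ => simp only [add_tmul, tmul_add, map_add, h₁, h₂]

lemma F4 (actA_mul : ∀ (x y : H) (a : A),
      actA ((x * y) ⊗ₜ[k] a) = actA (x ⊗ₜ[k] actA (y ⊗ₜ[k] a)))
    (Y : ((H ⊗[k] H) ⊗[k] H) ⊗[k] H) (a : A) (w : H ⊗[k] L) (b : A) (ℓ₂ : L) :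
    aΦ₄ actA actL st ((LinearMap.rTensor H (TensorProduct.assoc k H H H).toLinearMap Y)
        ⊗ₜ[k] ((a ⊗ₜ[k] w) ⊗ₜ[k] (b ⊗ₜ[k] ℓ₂)))
      = aXi actA actL st (Y ⊗ₜ[k] ((a ⊗ₜ[k] w) ⊗ₜ[k] (b ⊗ₜ[k] ℓ₂))) := by
  induction Y using TensorProduct.induction_on with
  | zero => simp
  | tmul Y' g₄ =>
    induction Y' using TensorProduct.induction_on with
    | zero => simp
    | tmul vp g₃ =>
      induction vp using TensorProduct.induction_on with
      | zero => simp
      | tmul v₁ v₂ =>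
        induction w using TensorProduct.induction_on with
        | zero => simp
        | tmul y m =>
          simp only [rTensor_tmul, LinearEquiv.coe_coe, assoc_tmul, aΦ₄_tmul, aXi_tmul, aP2_tmul,
            aTA2_tmul, aG_tmul, aB_tmul, aE_tmul, actA_mul]
        | add w₁ w₂ h₁ h₂ => simp only [add_tmul, tmul_add, map_add, h₁, h₂]
      | add v₁ v₂ h₁ h₂ => simp only [add_tmul, tmul_add, map_add, h₁, h₂]
    | add Y₁ Y₂ h₁ h₂ => simp only [add_tmul, tmul_add, map_add, h₁, h₂]
  | add Y₁ Y₂ h₁ h₂ => simp only [add_tmul, tmul_add, map_add, h₁, h₂]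

end AuxST9L

section AuxST9M

open TensorProduct LinearMap Coalgebra

variable {k : Type*} [CommRing k] {H : Type*} [Ring H] [HopfAlgebra k H]
  {L : Type*} [Ring L] [Algebra k L] {A : Type*} [AddCommGroup A] [Module k A]

variable (actA : H ⊗[k] A →ₗ[k] A) (actL : H ⊗[k] L →ₗ[k] L)
  (δ : L →ₗ[k] H ⊗[k] L) (st : A ⊗[k] A →ₗ[k] A ⊗[k] L)

lemma equivariant
    (actL_alg : ∀ (h : H) (ℓ₁ ℓ₂ : L),
      actL (h ⊗ₜ[k] (ℓ₁ * ℓ₂))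
        = (LinearMap.mul' k L) ((TensorProduct.map actL actL)
            ((TensorProduct.tensorTensorTensorComm k H H L L)
              ((Coalgebra.comul (R := k) h) ⊗ₜ[k] (ℓ₁ ⊗ₜ[k] ℓ₂)))))
    (hbase1 : (LinearMap.rTensor L (LinearMap.mul' k H)) ∘ₗ (rot3 k H L H) ∘ₗ
        (LinearMap.rTensor H δ) ∘ₗ (LinearMap.rTensor H actL) ∘ₗ (rot3 k H H L) ∘ₗ
        (LinearMap.rTensor L (Coalgebra.comul (R := k)))
      = (TensorProduct.map (LinearMap.mul' k H) actL) ∘ₗ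
          (TensorProduct.tensorTensorTensorComm k H H H L).toLinearMap ∘ₗ
          (TensorProduct.map (Coalgebra.comul (R := k)) δ))
    (actA_mul : ∀ (x y : H) (a : A),
      actA ((x * y) ⊗ₜ[k] a) = actA (x ⊗ₜ[k] actA (y ⊗ₜ[k] a)))
    (st_equiv : st ∘ₗ (tensorAction k actA actA)
      = (tensorAction k actA actL) ∘ₗ (LinearMap.lTensor H st)) :
    (inducedMul k δ actA st) ∘ₗ
        (tensorAction k (tensorAction k actA actL) (tensorAction k actA actL))
      = (tensorAction k actA actL) ∘ₗ
          (LinearMap.lTensor H (inducedMul k δ actA st)) := by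
  have h_alg : ∀ (z : H) (m n : L),
      actL (z ⊗ₜ[k] (m * n)) = aMA actL (comul (R := k) z ⊗ₜ[k] (m ⊗ₜ[k] n)) := by
    intro z m n
    rw [actL_alg]
    simp [aMA]
  have hb1e : ∀ (c : H) (ℓ : L),
      aP1 actL δ (comul (R := k) c ⊗ₜ[k] ℓ) = aP2 actL (comul (R := k) c ⊗ₜ[k] δ ℓ) := by
    intro c ℓ
    have h := DFunLike.congr_fun hbase1 (c ⊗ₜ[k] ℓ)
    simp only [coe_comp, Function.comp_apply, rTensor_tmul, map_tmul,
      LinearEquiv.coe_coe] at h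
    simp only [aP1, aP1', aP2, coe_comp, Function.comp_apply, LinearEquiv.coe_coe]
    exact h
  have hst : ∀ (x : H) (s : A ⊗[k] A),
      st (tensorAction k actA actA (x ⊗ₜ[k] s))
        = tensorAction k actA actL (x ⊗ₜ[k] st s) := by
    intro x s
    have h := DFunLike.congr_fun st_equiv (x ⊗ₜ[k] s)
    simpa using h
  apply TensorProduct.ext'
  intro x r
  induction r using TensorProduct.induction_on with
  | zero => simp
  | tmul p q =>
    induction p using TensorProduct.induction_on with
    | zero => simp
    | tmul a ℓ₁ =>
      induction q using TensorProduct.induction_on with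
      | zero => simp
      | tmul b ℓ₂ =>
        simp only [coe_comp, Function.comp_apply, lTensor_tmul]
        have e1 : tensorAction k (tensorAction k actA actL) (tensorAction k actA actL)
            (x ⊗ₜ[k] ((a ⊗ₜ[k] ℓ₁) ⊗ₜ[k] (b ⊗ₜ[k] ℓ₂)))
            = TensorProduct.map (tensorAction k actA actL) (tensorAction k actA actL)
                (TensorProduct.tensorTensorTensorComm k H H (A ⊗[k] L) (A ⊗[k] L)
                  (comul (R := k) x ⊗ₜ[k] ((a ⊗ₜ[k] ℓ₁) ⊗ₜ[k] (b ⊗ₜ[k] ℓ₂)))) := by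
          simp [tensorAction]
        rw [e1, F1, F2 actA actL δ st actA_mul, coY, ← coZ,
          F3 actA actL δ st hb1e, coZ, F4 actA actL st actA_mul,
          mu_tmul, tensorAction_tmul, E1 actA actL h_alg,
          Coalgebra.coassoc_symm_apply, E2 actA actL st h_alg, coZ,
          E5 actA actL st, E6 actA actL st hst]
      | add q₁ q₂ h₁ h₂ => simp only [add_tmul, tmul_add, map_add, h₁, h₂]
    | add p₁ p₂ h₁ h₂ => simp only [add_tmul, tmul_add, map_add, h₁, h₂]
  | add r₁ r₂ h₁ h₂ => simp only [tmul_add, map_add, h₁, h₂]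

end AuxST9M

theorem statement9
    -- `L` is a base algebra over `H`, with action `actL` and coaction `δ`:
    (actL : H ⊗[k] L →ₗ[k] L) (δ : L →ₗ[k] H ⊗[k] L)
    (actL_one : ∀ ℓ : L, actL ((1 : H) ⊗ₜ[k] ℓ) = ℓ)
    (actL_mul : ∀ (x y : H) (ℓ : L), actL ((x * y) ⊗ₜ[k] ℓ) = actL (x ⊗ₜ[k] actL (y ⊗ₜ[k] ℓ)))
    (actL_alg : ∀ (h : H) (ℓ₁ ℓ₂ : L),
      actL (h ⊗ₜ[k] (ℓ₁ * ℓ₂))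
        = (LinearMap.mul' k L) ((TensorProduct.map actL actL)
            ((TensorProduct.tensorTensorTensorComm k H H L L)
              ((Coalgebra.comul (R := k) h) ⊗ₜ[k] (ℓ₁ ⊗ₜ[k] ℓ₂)))))
    (actL_unit : ∀ h : H, actL (h ⊗ₜ[k] (1 : L)) = (Coalgebra.counit (R := k) h) • (1 : L))
    (δ_alg : ∀ ℓ₁ ℓ₂ : L, δ (ℓ₁ * ℓ₂) = δ ℓ₁ * δ ℓ₂) (δ_one : δ (1 : L) = 1)
    (δ_coassoc : (LinearMap.rTensor L (Coalgebra.comul (R := k))) ∘ₗ δ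
      = (TensorProduct.assoc k H H L).symm.toLinearMap ∘ₗ (LinearMap.lTensor H δ) ∘ₗ δ)
    (δ_counit : (TensorProduct.lid k L).toLinearMap ∘ₗ
      (LinearMap.rTensor L (Coalgebra.counit (R := k))) ∘ₗ δ = LinearMap.id)
    -- base-algebra condition (i):
    (hbase1 : (LinearMap.rTensor L (LinearMap.mul' k H)) ∘ₗ (rot3 k H L H) ∘ₗ
        (LinearMap.rTensor H δ) ∘ₗ (LinearMap.rTensor H actL) ∘ₗ (rot3 k H H L) ∘ₗ
        (LinearMap.rTensor L (Coalgebra.comul (R := k)))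
      = (TensorProduct.map (LinearMap.mul' k H) actL) ∘ₗ
          (TensorProduct.tensorTensorTensorComm k H H H L).toLinearMap ∘ₗ
          (TensorProduct.map (Coalgebra.comul (R := k)) δ))
    -- base-algebra condition (ii):
    (hbase2 : LinearMap.mul' k L
      = (LinearMap.mul' k L) ∘ₗ (LinearMap.rTensor L actL) ∘ₗ (rot3 k H L L) ∘ₗ
          (LinearMap.rTensor L δ))
    -- `A` is a left `H`-module:
    (actA : H ⊗[k] A →ₗ[k] A)
    (actA_one : ∀ a : A, actA ((1 : H) ⊗ₜ[k] a) = a)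
    (actA_mul : ∀ (x y : H) (a : A), actA ((x * y) ⊗ₜ[k] a) = actA (x ⊗ₜ[k] actA (y ⊗ₜ[k] a)))
    -- the `H`-equivariant map `⊛ : A ⊗ A → A ⊗ L`:
    (st : A ⊗[k] A →ₗ[k] A ⊗[k] L)
    (st_equiv : st ∘ₗ (tensorAction k actA actA)
      = (tensorAction k actA actL) ∘ₗ (LinearMap.lTensor H st)) :
    -- shifted associativity holds iff the induced product makes `A ⊗ L` an associative
    -- `H`-module algebra:
    (shiftedL k δ actA st = shiftedR k st)
      ↔ ((inducedMul k δ actA st) ∘ₗ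
            (LinearMap.rTensor (A ⊗[k] L) (inducedMul k δ actA st))
          = (inducedMul k δ actA st) ∘ₗ
              (LinearMap.lTensor (A ⊗[k] L) (inducedMul k δ actA st)) ∘ₗ
              (TensorProduct.assoc k (A ⊗[k] L) (A ⊗[k] L) (A ⊗[k] L)).toLinearMap ∧
        (inducedMul k δ actA st) ∘ₗ
            (tensorAction k (tensorAction k actA actL) (tensorAction k actA actL))
          = (tensorAction k actA actL) ∘ₗ
              (LinearMap.lTensor H (inducedMul k δ actA st))) := by
  constructor
  · intro hsh
    exact ⟨forward_assoc actA actL δ st δ_alg δ_coassoc hbase2 actA_mul st_equiv hsh,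
      equivariant actA actL δ st actL_alg hbase1 actA_mul st_equiv⟩
  · rintro ⟨hassoc, -⟩
    exact backward_shift actA δ st δ_one actA_one hassoc


end
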